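/- arXiv:math/0101075 — 6 statements merged into one kernel-verified Lean document; each statement's English description precedes it below -/
import Mathlib

section
/- If P is a k-Eulerian poset of rank n+1, then L^{k,n+1}_S(P) = 0 for every subset S ⊆ [1,n] that is not even, i.e., not a disjoint union of intervals of even cardinality. -/
open scoped Classical

attribute [local instance] Fintype.ofFinite

/-- A rank function making a bounded poset graded of rank `n+1`. -/
def IsGraded (P : Type) [PartialOrder P] [BoundedOrder P] (ρ : P → ℕ) (n : ℕ) : Prop :=
  ρ ⊥ = 0 ∧ ρ ⊤ = n + 1 ∧ ∀ x y : P, x ⋖ y → ρ y = ρ x + 1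

/-- A poset is `r`-thick if every nonempty open interval has at least `r` elements. -/
def RThick (P : Type) [PartialOrder P] [Fintype P] (r : ℕ) : Prop :=
  ∀ x y : P, x < y → (∃ z, x < z ∧ z < y) →
    r ≤ (Finset.univ.filter fun z => x < z ∧ z < y).card

/-- The flag number `f_S(P)`: the number of chains of `P` whose set of ranks is `S`. -/
noncomputable def flagNum {P : Type} [PartialOrder P] [Fintype P] (ρ : P → ℕ)
    (S : Finset ℕ) : ℕ :=
  (Finset.univ.filter fun c : Finset P =>
    IsChain (· ≤ ·) (c : Set P) ∧ c.image ρ = S ∧ c.card = S.card).card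

/-- The flag number `f_S([x,y])` of the interval `[x,y]`, with ranks relative to `x`. -/
noncomputable def flagNumI {P : Type} [PartialOrder P] [Fintype P] (ρ : P → ℕ)
    (x y : P) (S : Finset ℕ) : ℕ :=
  (Finset.univ.filter fun c : Finset P =>
    IsChain (· ≤ ·) (c : Set P) ∧ (∀ z ∈ c, x < z ∧ z < y) ∧
      c.image (fun z => ρ z - ρ x) = S ∧ c.card = S.card).card

/-- The `k`-Möbius function `μ_k([x,y])`. -/
noncomputable def muk {P : Type} [PartialOrder P] [Fintype P] (k : ℝ) (x : P) (y : P) : ℝ :=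
  if x = y then 1
  else -1 - (1/k) * ∑ z ∈ (Finset.univ.filter fun z => x < z ∧ z < y).attach,
    muk k x z.val
termination_by (Finset.univ.filter fun w => w < y).card
decreasing_by
  have hz : (z : P) < y := (Finset.mem_filter.mp z.2).2.2
  apply Finset.card_lt_card
  rw [Finset.ssubset_iff_of_subset]
  · exact ⟨z, Finset.mem_filter.mpr ⟨Finset.mem_univ _, hz⟩,
      fun hc => absurd (Finset.mem_filter.mp hc).2 (lt_irrefl _)⟩
  · intro w hw
    exact Finset.mem_filter.mpr ⟨Finset.mem_univ _, (Finset.mem_filter.mp hw).2.trans hz⟩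

/-- The ordinary Möbius function of a finite poset. -/
noncomputable def mobius {P : Type} [PartialOrder P] [Fintype P] (x : P) (y : P) : ℤ :=
  if x = y then 1
  else -∑ z ∈ (Finset.univ.filter fun z => x ≤ z ∧ z < y).attach, mobius x z.val
termination_by (Finset.univ.filter fun w => w < y).card
decreasing_by
  have hz : (z : P) < y := (Finset.mem_filter.mp z.2).2.2
  apply Finset.card_lt_card
  rw [Finset.ssubset_iff_of_subset]
  · exact ⟨z, Finset.mem_filter.mpr ⟨Finset.mem_univ _, hz⟩,
      fun hc => absurd (Finset.mem_filter.mp hc).2 (lt_irrefl _)⟩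
  · intro w hw
    exact Finset.mem_filter.mpr ⟨Finset.mem_univ _, (Finset.mem_filter.mp hw).2.trans hz⟩

/-- A graded poset is `k`-Eulerian when `μ_k([x,y]) = (-1)^{ρ(y)-ρ(x)}` on every interval. -/
def IsKEulerian (P : Type) [PartialOrder P] [Fintype P] (ρ : P → ℕ) (k : ℝ) : Prop :=
  ∀ x y : P, x ≤ y → muk k x y = (-1 : ℝ) ^ (ρ y - ρ x)

/-- The flag `L^k` vector of a poset of rank `n+1`. -/
noncomputable def Lk {P : Type} [PartialOrder P] [Fintype P] (k : ℝ) (n : ℕ) (ρ : P → ℕ)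
    (S : Finset ℕ) : ℝ :=
  (-1 : ℝ) ^ (n - S.card) *
    ∑ T ∈ (Finset.Icc 1 n).powerset.filter (fun T => Finset.Icc 1 n \ S ⊆ T),
      (-(1/(2*k))) ^ T.card * (flagNum ρ T : ℝ)

/-- The flag `L^k` vector of an interval `[x,y]` of rank `n+1`. -/
noncomputable def LkI {P : Type} [PartialOrder P] [Fintype P] (k : ℝ) (n : ℕ) (ρ : P → ℕ)
    (x y : P) (S : Finset ℕ) : ℝ :=
  (-1 : ℝ) ^ (n - S.card) *
    ∑ T ∈ (Finset.Icc 1 n).powerset.filter (fun T => Finset.Icc 1 n \ S ⊆ T),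
      (-(1/(2*k))) ^ T.card * (flagNumI ρ x y T : ℝ)

/-- A set is even if it is a disjoint union of intervals of even cardinality. -/
def IsEvenSet (S : Finset ℕ) : Prop :=
  ∃ J : Finset (ℕ × ℕ),
    S = J.biUnion (fun p => Finset.Icc p.1 p.2) ∧
    (∀ p ∈ J, p.1 ≤ p.2 ∧ Even (p.2 + 1 - p.1)) ∧
    (∀ p ∈ J, ∀ q ∈ J, p ≠ q → Disjoint (Finset.Icc p.1 p.2) (Finset.Icc q.1 q.2))

/-- The horizontal `r`-fold duplication `D^r P`. -/
inductive Dup (P : Type) [PartialOrder P] [BoundedOrder P] (r : ℕ) : Type where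
  | bot : Dup P r
  | top : Dup P r
  | mid : {x : P // x ≠ ⊥ ∧ x ≠ ⊤} → Fin r → Dup P r

namespace Dup

variable {P : Type} [PartialOrder P] [BoundedOrder P] {r : ℕ}

def le : Dup P r → Dup P r → Prop
  | .bot, _ => True
  | .mid _ _, .bot => False
  | .mid x i, .mid y j => (x = y ∧ i = j) ∨ (x : P) < (y : P)
  | .mid _ _, .top => True
  | .top, .top => True
  | .top, _ => False

instance : PartialOrder (Dup P r) where
  le := Dup.le
  le_refl a := by cases a with
    | bot => trivial
    | top => trivial
    | mid x i => exact Or.inl ⟨rfl, rfl⟩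
  le_trans a b c hab hbc := by
    cases a with
    | bot => trivial
    | top =>
      cases b with
      | top =>
        cases c with
        | top => trivial
        | bot => exact hbc.elim
        | mid _ _ => exact hbc.elim
      | bot => exact hab.elim
      | mid _ _ => exact hab.elim
    | mid x i =>
      cases b with
      | bot => exact hab.elim
      | top =>
        cases c with
        | top => trivial
        | bot => exact hbc.elim
        | mid _ _ => exact hbc.elim
      | mid y j =>
        cases c with
        | bot => exact hbc.elim
        | top => trivial
        | mid z l =>
          rcases hab with ⟨rfl, rfl⟩ | h1
          · exact hbc
          · rcases hbc with ⟨rfl, rfl⟩ | h2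
            · exact Or.inr h1
            · exact Or.inr (h1.trans h2)
  le_antisymm a b hab hba := by
    cases a with
    | bot =>
      cases b with
      | bot => rfl
      | top => exact hba.elim
      | mid _ _ => exact hba.elim
    | top =>
      cases b with
      | top => rfl
      | bot => exact hab.elim
      | mid _ _ => exact hab.elim
    | mid x i =>
      cases b with
      | bot => exact hab.elim
      | top => exact hba.elim
      | mid y j =>
        rcases hab with ⟨rfl, rfl⟩ | h1
        · rfl
        · rcases hba with ⟨rfl, rfl⟩ | h2
          · exact absurd h1 (lt_irrefl _)
          · exact absurd (h1.trans h2) (lt_irrefl _)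

instance : BoundedOrder (Dup P r) where
  top := .top
  bot := .bot
  le_top a := by cases a <;> trivial
  bot_le a := trivial

instance [Finite P] : Finite (Dup P r) :=
  Finite.of_injective
    (fun a : Dup P r =>
      (match a with
        | .bot => none
        | .top => some none
        | .mid x i => some (some (x, i)) :
        Option (Option ({x : P // x ≠ ⊥ ∧ x ≠ ⊤} × Fin r))))
    (by intro a b h; cases a <;> cases b <;> simp_all)

/-- The rank function of `D^r P`, where `P` has rank `n+1`. -/
def rank (ρ : P → ℕ) (n : ℕ) : Dup P r → ℕ
  | .bot => 0
  | .top => n + 1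
  | .mid x _ => ρ x.val

/-- `a ∈ D^r P` is a copy of `x ∈ P`. -/
def IsCopy (a : Dup P r) (x : P) : Prop :=
  (x = ⊥ ∧ a = .bot) ∨ (x = ⊤ ∧ a = .top) ∨ ∃ h i, a = .mid ⟨x, h⟩ i

end Dup

namespace KE

open Finset

variable {P : Type} [PartialOrder P] [Fintype P]

/-- The open interval `(x,y)` as a finset. -/
noncomputable def oI (x y : P) : Finset P := Finset.univ.filter fun z => x < z ∧ z < y

lemma mem_oI {x y z : P} : z ∈ oI x y ↔ x < z ∧ z < y := by simp [oI]

/-- Chains contained in the open interval `(x,y)`. -/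
noncomputable def Ch (x y : P) : Finset (Finset P) :=
  Finset.univ.filter fun c => IsChain (· ≤ ·) (c : Set P) ∧ ∀ z ∈ c, x < z ∧ z < y

lemma mem_Ch {x y : P} {c : Finset P} :
    c ∈ Ch x y ↔ IsChain (· ≤ ·) (c : Set P) ∧ ∀ z ∈ c, x < z ∧ z < y := by simp [Ch]

/-- The weighted chain sum of the open interval `(x,y)`. -/
noncomputable def Hf (w : ℝ) (x y : P) : ℝ := ∑ c ∈ Ch x y, w ^ c.card

/-- Decomposition of `Ch x y` by least element. -/
lemma Ch_eq_min (x y : P) :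
    Ch x y = insert ∅ ((oI x y).biUnion fun z => (Ch z y).image (insert z)) := by
  ext c
  constructor
  · intro hc
    rcases mem_Ch.1 hc with ⟨hch, hmem⟩
    rcases eq_or_ne c ∅ with rfl | hne
    · exact mem_insert_self _ _
    · obtain ⟨z, hz, hzmin⟩ := c.exists_minimal (nonempty_iff_ne_empty.2 hne)
      have hleast : ∀ u ∈ c, z ≤ u := by
        intro u hu
        rcases eq_or_ne u z with rfl | hne'
        · exact le_refl _
        · rcases hch (by exact_mod_cast hz) (by exact_mod_cast hu) (Ne.symm hne') with h | h
          · exact h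
          · exact absurd (lt_of_le_of_ne h hne') (fun hlt => lt_irrefl _ (hlt.trans_le (hzmin hu hlt.le)))
      refine mem_insert_of_mem (Finset.mem_biUnion.2 ⟨z, mem_oI.2 (hmem z hz), ?_⟩)
      refine Finset.mem_image.2 ⟨c.erase z, ?_, Finset.insert_erase hz⟩
      refine mem_Ch.2 ⟨hch.mono ?_, ?_⟩
      · exact_mod_cast Finset.coe_subset.2 (Finset.erase_subset _ _)
      · intro u hu
        have hu' : u ∈ c := Finset.mem_of_mem_erase hu
        exact ⟨lt_of_le_of_ne (hleast u hu') (Ne.symm (Finset.ne_of_mem_erase hu)),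
          (hmem u hu').2⟩
  · intro hc
    rcases Finset.mem_insert.1 hc with rfl | hc
    · exact mem_Ch.2 ⟨by simp, by simp⟩
    · obtain ⟨z, hz, hc⟩ := Finset.mem_biUnion.1 hc
      obtain ⟨d, hd, rfl⟩ := Finset.mem_image.1 hc
      rcases mem_Ch.1 hd with ⟨hch, hmem⟩
      rcases mem_oI.1 hz with ⟨hxz, hzy⟩
      refine mem_Ch.2 ⟨?_, ?_⟩
      · rw [Finset.coe_insert]
        exact hch.insert fun b hb _ => Or.inl (le_of_lt (hmem b (by exact_mod_cast hb)).1)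
      · intro u hu
        rcases Finset.mem_insert.1 hu with rfl | hu
        · exact ⟨hxz, hzy⟩
        · exact ⟨hxz.trans (hmem u hu).1, (hmem u hu).2⟩

/-- Decomposition of `Ch x y` by greatest element. -/
lemma Ch_eq_max (x y : P) :
    Ch x y = insert ∅ ((oI x y).biUnion fun z => (Ch x z).image (insert z)) := by
  ext c
  constructor
  · intro hc
    rcases mem_Ch.1 hc with ⟨hch, hmem⟩
    rcases eq_or_ne c ∅ with rfl | hne
    · exact mem_insert_self _ _
    · obtain ⟨z, hz, hzmax⟩ := c.exists_maximal (nonempty_iff_ne_empty.2 hne)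
      have hgreat : ∀ u ∈ c, u ≤ z := by
        intro u hu
        rcases eq_or_ne u z with rfl | hne'
        · exact le_refl _
        · rcases hch (by exact_mod_cast hz) (by exact_mod_cast hu) (Ne.symm hne') with h | h
          · exact absurd (lt_of_le_of_ne h (Ne.symm hne')) (fun hlt => lt_irrefl _ (hlt.trans_le (hzmax hu hlt.le)))
          · exact h
      refine mem_insert_of_mem (Finset.mem_biUnion.2 ⟨z, mem_oI.2 (hmem z hz), ?_⟩)
      refine Finset.mem_image.2 ⟨c.erase z, ?_, Finset.insert_erase hz⟩
      refine mem_Ch.2 ⟨hch.mono ?_, ?_⟩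
      · exact_mod_cast Finset.coe_subset.2 (Finset.erase_subset _ _)
      · intro u hu
        have hu' : u ∈ c := Finset.mem_of_mem_erase hu
        exact ⟨(hmem u hu').1,
          lt_of_le_of_ne (hgreat u hu') (Finset.ne_of_mem_erase hu)⟩
  · intro hc
    rcases Finset.mem_insert.1 hc with rfl | hc
    · exact mem_Ch.2 ⟨by simp, by simp⟩
    · obtain ⟨z, hz, hc⟩ := Finset.mem_biUnion.1 hc
      obtain ⟨d, hd, rfl⟩ := Finset.mem_image.1 hc
      rcases mem_Ch.1 hd with ⟨hch, hmem⟩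
      rcases mem_oI.1 hz with ⟨hxz, hzy⟩
      refine mem_Ch.2 ⟨?_, ?_⟩
      · rw [Finset.coe_insert]
        exact hch.insert fun b hb _ => Or.inr (le_of_lt (hmem b (by exact_mod_cast hb)).2)
      · intro u hu
        rcases Finset.mem_insert.1 hu with rfl | hu
        · exact ⟨hxz, hzy⟩
        · exact ⟨(hmem u hu).1, (hmem u hu).2.trans hzy⟩

lemma not_mem_self_Ch {z y' : P} {d : Finset P} (hd : d ∈ Ch z y') : z ∉ d :=
  fun h => lt_irrefl z ((mem_Ch.1 hd).2 z h).1

lemma not_mem_self_Ch' {z x' : P} {d : Finset P} (hd : d ∈ Ch x' z) : z ∉ d :=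
  fun h => lt_irrefl z ((mem_Ch.1 hd).2 z h).2

lemma sum_Ch_insert {w : ℝ} (z : P) (s : Finset (Finset P)) (hz : ∀ d ∈ s, z ∉ d) :
    ∑ c ∈ s.image (insert z), w ^ c.card = w * ∑ d ∈ s, w ^ d.card := by
  rw [Finset.sum_image]
  · rw [Finset.mul_sum]
    refine Finset.sum_congr rfl fun d hd => ?_
    rw [Finset.card_insert_of_notMem (hz d hd), pow_succ]
    ring
  · intro d hd d' hd' h
    have : (insert z d).erase z = (insert z d').erase z := by rw [h]
    rwa [Finset.erase_insert (hz d hd), Finset.erase_insert (hz d' hd')] at this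

lemma empty_not_mem_biUnion_min (x y : P) :
    (∅ : Finset P) ∉ (oI x y).biUnion fun z => (Ch z y).image (insert z) := by
  intro h
  obtain ⟨z, _, h⟩ := Finset.mem_biUnion.1 h
  obtain ⟨d, _, h⟩ := Finset.mem_image.1 h
  exact (Finset.insert_ne_empty _ _) h

lemma empty_not_mem_biUnion_max (x y : P) :
    (∅ : Finset P) ∉ (oI x y).biUnion fun z => (Ch x z).image (insert z) := by
  intro h
  obtain ⟨z, _, h⟩ := Finset.mem_biUnion.1 h
  obtain ⟨d, _, h⟩ := Finset.mem_image.1 h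
  exact (Finset.insert_ne_empty _ _) h

/-- Min-element recursion for `Hf`. -/
lemma Hf_min (w : ℝ) (x y : P) : Hf w x y = 1 + w * ∑ z ∈ oI x y, Hf w z y := by
  unfold Hf
  rw [Ch_eq_min, Finset.sum_insert (empty_not_mem_biUnion_min x y), Finset.card_empty, pow_zero]
  congr 1
  rw [Finset.sum_biUnion, Finset.mul_sum]
  · exact Finset.sum_congr rfl fun z hz => sum_Ch_insert z _ (fun d hd => not_mem_self_Ch hd)
  · intro z hz z' hz' hne
    simp only [Function.onFun]
    rw [Finset.disjoint_left]
    rintro c hc hc'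
    obtain ⟨d, hd, rfl⟩ := Finset.mem_image.1 hc
    obtain ⟨d', hd', he⟩ := Finset.mem_image.1 hc'
    have h1 : z' ∈ insert z d := by rw [← he]; exact Finset.mem_insert_self _ _
    have h2 : z ∈ insert z' d' := by rw [he]; exact Finset.mem_insert_self _ _
    rcases Finset.mem_insert.1 h1 with h | h
    · exact hne h.symm
    · have hzz' : z < z' := ((mem_Ch.1 hd).2 z' h).1
      rcases Finset.mem_insert.1 h2 with h' | h'
      · exact hne h'
      · exact lt_irrefl z (hzz'.trans ((mem_Ch.1 hd').2 z h').1)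

/-- Max-element recursion for `Hf`. -/
lemma Hf_max (w : ℝ) (x y : P) : Hf w x y = 1 + w * ∑ z ∈ oI x y, Hf w x z := by
  unfold Hf
  rw [Ch_eq_max, Finset.sum_insert (empty_not_mem_biUnion_max x y), Finset.card_empty, pow_zero]
  congr 1
  rw [Finset.sum_biUnion, Finset.mul_sum]
  · exact Finset.sum_congr rfl fun z hz => sum_Ch_insert z _ (fun d hd => not_mem_self_Ch' hd)
  · intro z hz z' hz' hne
    simp only [Function.onFun]
    rw [Finset.disjoint_left]
    rintro c hc hc'
    obtain ⟨d, hd, rfl⟩ := Finset.mem_image.1 hc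
    obtain ⟨d', hd', he⟩ := Finset.mem_image.1 hc'
    have h1 : z' ∈ insert z d := by rw [← he]; exact Finset.mem_insert_self _ _
    have h2 : z ∈ insert z' d' := by rw [he]; exact Finset.mem_insert_self _ _
    rcases Finset.mem_insert.1 h1 with h | h
    · exact hne h.symm
    · have hzz' : z' < z := ((mem_Ch.1 hd).2 z' h).2
      rcases Finset.mem_insert.1 h2 with h' | h'
      · exact hne h'
      · exact lt_irrefl z (((mem_Ch.1 hd').2 z h').2.trans hzz')

end KE

namespace KE

open Finset

set_option linter.unusedSectionVars false

variable {P : Type} [PartialOrder P] [Fintype P]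

/-- In a finite poset where covers raise a rank function by one, rank is strictly monotone. -/
lemma rank_strictMono {ρ : P → ℕ} (hcov : ∀ a b : P, a ⋖ b → ρ b = ρ a + 1) :
    ∀ {x y : P}, x < y → ρ x < ρ y := by
  suffices h : ∀ N, ∀ x y : P, (Finset.univ.filter fun w => x < w ∧ w ≤ y).card ≤ N →
      x < y → ρ x < ρ y by
    intro x y hxy
    exact h _ x y le_rfl hxy
  intro N
  induction N with
  | zero =>
    intro x y hcard hxy
    have hy : y ∈ Finset.univ.filter fun w => x < w ∧ w ≤ y :=
      Finset.mem_filter.2 ⟨Finset.mem_univ _, hxy, le_rfl⟩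
    have := Finset.card_pos.2 ⟨y, hy⟩
    omega
  | succ N IH =>
    intro x y hcard hxy
    have hne : (Finset.univ.filter fun w => x < w ∧ w ≤ y).Nonempty :=
      ⟨y, Finset.mem_filter.2 ⟨Finset.mem_univ _, hxy, le_rfl⟩⟩
    obtain ⟨z, hz, hzmin⟩ := Finset.exists_minimal hne
    rcases Finset.mem_filter.1 hz with ⟨-, hxz, hzy⟩
    have hcovz : x ⋖ z := by
      refine ⟨hxz, fun w hw hwz => ?_⟩
      exact lt_irrefl _ (hwz.trans_le (hzmin (Finset.mem_filter.2 ⟨Finset.mem_univ _, hw, hwz.le.trans hzy⟩) hwz.le))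
    have hrz : ρ z = ρ x + 1 := hcov x z hcovz
    rcases eq_or_lt_of_le hzy with rfl | hzy'
    · omega
    · have hsub : (Finset.univ.filter fun w => z < w ∧ w ≤ y) ⊂
          (Finset.univ.filter fun w => x < w ∧ w ≤ y) := by
        refine Finset.ssubset_iff_of_subset ?_ |>.2 ⟨z, hz, ?_⟩
        · intro w hw
          rcases Finset.mem_filter.1 hw with ⟨-, h1, h2⟩
          exact Finset.mem_filter.2 ⟨Finset.mem_univ _, hxz.trans h1, h2⟩
        · intro hmem
          exact lt_irrefl z (Finset.mem_filter.1 hmem).2.1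
      have := IH z y (by have := Finset.card_lt_card hsub; omega) hzy'
      omega

/-- The Euler-type relation coming from `k`-Eulerianness of all intervals. -/
lemma euler_rel {ρ : P → ℕ} {k : ℝ} (hk : k ≠ 0) (hE : IsKEulerian P ρ k) {x y : P}
    (hxy : x < y) :
    ∑ z ∈ oI x y, ((-1 : ℝ)) ^ (ρ z - ρ x) = -k * (1 + (-1) ^ (ρ y - ρ x)) := by
  have h1 := hE x y hxy.le
  rw [muk, if_neg (ne_of_lt hxy)] at h1
  have hs : ∑ z ∈ (Finset.univ.filter fun z => x < z ∧ z < y).attach, muk k x z.val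
      = ∑ z ∈ (Finset.univ.filter fun z => x < z ∧ z < y), muk k x z :=
    Finset.sum_attach _ _
  rw [hs] at h1
  have h2 : ∑ z ∈ Finset.univ.filter (fun z => x < z ∧ z < y), muk k x z
      = ∑ z ∈ oI x y, ((-1 : ℝ)) ^ (ρ z - ρ x) := by
    refine Finset.sum_congr rfl fun z hz => ?_
    exact hE x z (mem_oI.1 (by simpa [oI] using hz)).1.le
  rw [h2] at h1
  have hk' : (1 / k) * ∑ z ∈ oI x y, ((-1 : ℝ)) ^ (ρ z - ρ x)
      = -1 - (-1 : ℝ) ^ (ρ y - ρ x) := by linarith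
  field_simp at hk'
  linarith

/-- Rewrite a filtered double sum as an `ite` double sum. -/
lemma sum_filter_ite (r : P → Prop) (s : P → P → Prop)
    [DecidablePred r] [∀ z, DecidablePred (s z)] (g : P → P → ℝ) :
    ∑ z ∈ Finset.univ.filter r, ∑ v ∈ Finset.univ.filter (s z), g z v
      = ∑ z ∈ (Finset.univ : Finset P), ∑ v ∈ (Finset.univ : Finset P),
          if r z ∧ s z v then g z v else 0 := by
  rw [Finset.sum_filter]
  refine Finset.sum_congr rfl fun z _ => ?_
  split_ifs with h1
  · rw [Finset.sum_filter]
    refine Finset.sum_congr rfl fun v _ => ?_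
    split_ifs with h2 h3 h3
    · rfl
    · exact absurd ⟨h1, h2⟩ h3
    · exact absurd h3.2 h2
    · rfl
  · symm
    refine Finset.sum_eq_zero fun v _ => if_neg fun hc => h1 hc.1

/-- Swap of a double sum over filter predicates. -/
lemma sum_swap_pred (p : P → Prop) (q : P → P → Prop) (p' : P → Prop) (q' : P → P → Prop)
    [DecidablePred p] [∀ z, DecidablePred (q z)] [DecidablePred p']
    [∀ v, DecidablePred (q' v)]
    (h : ∀ z v, (p z ∧ q z v) ↔ (p' v ∧ q' v z)) (f : P → P → ℝ) :
    ∑ z ∈ Finset.univ.filter p, ∑ v ∈ Finset.univ.filter (q z), f z v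
      = ∑ v ∈ Finset.univ.filter p', ∑ z ∈ Finset.univ.filter (q' v), f z v := by
  rw [sum_filter_ite p q f, sum_filter_ite p' q' (fun v z => f z v), Finset.sum_comm]
  refine Finset.sum_congr rfl fun v _ => Finset.sum_congr rfl fun z _ => ?_
  exact if_congr (h z v) rfl rfl

section AB

variable {ρ : P → ℕ} {k w : ℝ}

/-- The key vanishing lemma (joint with the `2k` sum identity), by strong induction. -/
lemma AB (hst : ∀ {a b : P}, a < b → ρ a < ρ b)
    (hE : IsKEulerian P ρ k) (hw : w * (2 * k) = -1) :
    ∀ m : ℕ, Even m → ∀ x y : P, x < y → ρ y - ρ x = m →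
      (∑ z ∈ oI x y, Hf w z y) = 2 * k ∧ Hf w x y = 0 := by
  have hk : k ≠ 0 := by
    rintro rfl
    rw [mul_zero, mul_zero] at hw
    norm_num at hw
  intro m
  induction m using Nat.strong_induction_on with
  | _ m IH =>
    intro hm x y hxy hrk
    have hmmod : m % 2 = 0 := Nat.even_iff.1 hm
    -- the even-z terms vanish
    have hevenz : ∀ z ∈ (oI x y).filter (fun z => ¬ Odd (ρ z - ρ x)), Hf w z y = 0 := by
      intro z hz
      rcases Finset.mem_filter.1 hz with ⟨hz1, hz2⟩
      rcases mem_oI.1 hz1 with ⟨hxz, hzy⟩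
      have e1 : ρ x < ρ z := hst hxz
      have e2 : ρ z < ρ y := hst hzy
      rw [Nat.not_odd_iff_even, Nat.even_iff] at hz2
      refine (IH (ρ y - ρ z) (by omega) (Nat.even_iff.2 (by omega)) z y hzy rfl).2
    -- T = sum over odd z
    have hTsplit : (∑ z ∈ oI x y, Hf w z y)
        = ∑ z ∈ (oI x y).filter (fun z => Odd (ρ z - ρ x)), Hf w z y := by
      rw [← Finset.sum_filter_add_sum_filter_not (oI x y) (fun z => Odd (ρ z - ρ x))]
      rw [Finset.sum_eq_zero hevenz, add_zero]
    -- expand each odd z by max-recursion with even inner terms vanishing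
    have hexp : ∀ z, (x < z ∧ z < y) → Odd (ρ z - ρ x) →
        Hf w z y = 1 + w * ∑ v ∈ (oI z y).filter (fun v => Odd (ρ v - ρ z)), Hf w z v := by
      intro z hz hodd
      rw [Hf_max w z y]
      congr 2
      rw [← Finset.sum_filter_add_sum_filter_not (oI z y) (fun v => Odd (ρ v - ρ z))]
      have : ∀ v ∈ (oI z y).filter (fun v => ¬ Odd (ρ v - ρ z)), Hf w z v = 0 := by
        intro v hv
        rcases Finset.mem_filter.1 hv with ⟨hv1, hv2⟩
        rcases mem_oI.1 hv1 with ⟨hzv, hvy⟩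
        have e1 : ρ x < ρ z := hst hz.1
        have e2 : ρ z < ρ v := hst hzv
        have e3 : ρ v < ρ y := hst hvy
        rw [Nat.not_odd_iff_even, Nat.even_iff] at hv2
        exact (IH (ρ v - ρ z) (by omega) (Nat.even_iff.2 (by omega)) z v hzv rfl).2
      rw [Finset.sum_eq_zero this, add_zero]
    -- put filters in `univ.filter` form
    have hfilter1 : (oI x y).filter (fun z => Odd (ρ z - ρ x))
        = Finset.univ.filter (fun z => (x < z ∧ z < y) ∧ Odd (ρ z - ρ x)) := by
      rw [oI, Finset.filter_filter]
    have hfilter2 : ∀ z : P, (oI z y).filter (fun v => Odd (ρ v - ρ z))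
        = Finset.univ.filter (fun v => (z < v ∧ v < y) ∧ Odd (ρ v - ρ z)) := by
      intro z; rw [oI, Finset.filter_filter]
    -- the swapped double sum
    have hswap :
        ∑ z ∈ Finset.univ.filter (fun z => (x < z ∧ z < y) ∧ Odd (ρ z - ρ x)),
          ∑ v ∈ Finset.univ.filter (fun v => (z < v ∧ v < y) ∧ Odd (ρ v - ρ z)), Hf w z v
        = ∑ v ∈ Finset.univ.filter (fun v => (x < v ∧ v < y) ∧ ¬ Odd (ρ v - ρ x)),
          ∑ z ∈ Finset.univ.filter (fun z => (x < z ∧ z < v) ∧ Odd (ρ v - ρ z)), Hf w z v := by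
      refine sum_swap_pred (fun z => (x < z ∧ z < y) ∧ Odd (ρ z - ρ x))
        (fun z v => (z < v ∧ v < y) ∧ Odd (ρ v - ρ z))
        (fun v => (x < v ∧ v < y) ∧ ¬ Odd (ρ v - ρ x))
        (fun v z => (x < z ∧ z < v) ∧ Odd (ρ v - ρ z)) ?_ (fun z v => Hf w z v)
      intro z v
      constructor
      · rintro ⟨⟨⟨hxz, hzy⟩, ho1⟩, ⟨hzv, hvy⟩, ho2⟩
        have e1 : ρ x < ρ z := hst hxz
        have e2 : ρ z < ρ v := hst hzv
        rw [Nat.odd_iff] at ho1 ho2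
        refine ⟨⟨⟨hxz.trans hzv, hvy⟩, ?_⟩, ⟨hxz, hzv⟩, ?_⟩
        · show ¬ Odd (ρ v - ρ x)
          rw [Nat.not_odd_iff_even, Nat.even_iff]; omega
        · show Odd (ρ v - ρ z)
          rw [Nat.odd_iff]; omega
      · rintro ⟨⟨⟨hxv, hvy⟩, he⟩, ⟨hxz, hzv⟩, ho2⟩
        have e1 : ρ x < ρ z := hst hxz
        have e2 : ρ z < ρ v := hst hzv
        rw [Nat.not_odd_iff_even, Nat.even_iff] at he
        rw [Nat.odd_iff] at ho2
        refine ⟨⟨⟨hxz, hzv.trans hvy⟩, ?_⟩, ⟨hzv, hvy⟩, ?_⟩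
        · show Odd (ρ z - ρ x)
          rw [Nat.odd_iff]; omega
        · show Odd (ρ v - ρ z)
          rw [Nat.odd_iff]; omega
    -- inner sums equal 2k
    have hinner : ∀ v, (x < v ∧ v < y) → ¬ Odd (ρ v - ρ x) →
        ∑ z ∈ Finset.univ.filter (fun z => (x < z ∧ z < v) ∧ Odd (ρ v - ρ z)), Hf w z v
          = 2 * k := by
      intro v hv hve
      have e1 : ρ x < ρ v := hst hv.1
      have e2 : ρ v < ρ y := hst hv.2
      rw [Nat.not_odd_iff_even, Nat.even_iff] at hve
      have hB := (IH (ρ v - ρ x) (by omega) (Nat.even_iff.2 (by omega)) x v hv.1 rfl).1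
      rw [← hB]
      rw [← Finset.sum_filter_add_sum_filter_not (oI x v) (fun z => Odd (ρ v - ρ z))]
      have hz0 : ∀ z ∈ (oI x v).filter (fun z => ¬ Odd (ρ v - ρ z)), Hf w z v = 0 := by
        intro z hz
        rcases Finset.mem_filter.1 hz with ⟨hz1, hz2⟩
        rcases mem_oI.1 hz1 with ⟨hxz, hzv⟩
        have e3 : ρ x < ρ z := hst hxz
        have e4 : ρ z < ρ v := hst hzv
        rw [Nat.not_odd_iff_even, Nat.even_iff] at hz2
        exact (IH (ρ v - ρ z) (by omega) (Nat.even_iff.2 (by omega)) z v hzv rfl).2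
      rw [Finset.sum_eq_zero hz0, add_zero, oI, Finset.filter_filter]
    -- counting: (#even) - (#odd) = -2k
    set Aodd := Finset.univ.filter (fun z : P => (x < z ∧ z < y) ∧ Odd (ρ z - ρ x)) with hAodd
    set Aev := Finset.univ.filter (fun z : P => (x < z ∧ z < y) ∧ ¬ Odd (ρ z - ρ x)) with hAev
    have hcount : (Aev.card : ℝ) - (Aodd.card : ℝ) = -(2 * k) := by
      have he := euler_rel hk hE hxy
      rw [hrk, Even.neg_one_pow hm] at he
      have hsp : ∑ z ∈ oI x y, ((-1 : ℝ)) ^ (ρ z - ρ x)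
          = ∑ z ∈ (oI x y).filter (fun z => Odd (ρ z - ρ x)), ((-1 : ℝ)) ^ (ρ z - ρ x)
            + ∑ z ∈ (oI x y).filter (fun z => ¬ Odd (ρ z - ρ x)), ((-1 : ℝ)) ^ (ρ z - ρ x) :=
        (Finset.sum_filter_add_sum_filter_not _ _ _).symm
      have hodd' : ∑ z ∈ (oI x y).filter (fun z => Odd (ρ z - ρ x)), ((-1 : ℝ)) ^ (ρ z - ρ x)
          = -(Aodd.card : ℝ) := by
        rw [Finset.sum_congr rfl (fun z hz => Odd.neg_one_pow (Finset.mem_filter.1 hz).2)]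
        rw [Finset.sum_const, hAodd, oI, Finset.filter_filter]
        simp
      have hev' : ∑ z ∈ (oI x y).filter (fun z => ¬ Odd (ρ z - ρ x)), ((-1 : ℝ)) ^ (ρ z - ρ x)
          = (Aev.card : ℝ) := by
        rw [Finset.sum_congr rfl (fun z hz => Even.neg_one_pow
          (Nat.not_odd_iff_even.1 (Finset.mem_filter.1 hz).2))]
        rw [Finset.sum_const, hAev, oI, Finset.filter_filter]
        simp
      rw [hsp, hodd', hev'] at he
      linarith
    -- assemble: T = #odd + w * (2k * #even)
    have hT : (∑ z ∈ oI x y, Hf w z y) = 2 * k := by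
      rw [hTsplit, hfilter1]
      have : ∑ z ∈ Aodd, Hf w z y
          = ∑ z ∈ Aodd, (1 + w * ∑ v ∈ Finset.univ.filter
              (fun v => (z < v ∧ v < y) ∧ Odd (ρ v - ρ z)), Hf w z v) := by
        refine Finset.sum_congr rfl fun z hz => ?_
        rcases Finset.mem_filter.1 hz with ⟨-, hz1, hz2⟩
        rw [hexp z hz1 hz2, hfilter2]
      rw [this, Finset.sum_add_distrib, Finset.sum_const, ← Finset.mul_sum, hswap]
      have h2 : ∑ v ∈ Aev, ∑ z ∈ Finset.univ.filter
          (fun z => (x < z ∧ z < v) ∧ Odd (ρ v - ρ z)), Hf w z v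
          = ∑ v ∈ Aev, 2 * k := by
        refine Finset.sum_congr rfl fun v hv => ?_
        rcases Finset.mem_filter.1 hv with ⟨-, hv1, hv2⟩
        exact hinner v hv1 hv2
      rw [h2, Finset.sum_const, nsmul_eq_mul, nsmul_eq_mul, mul_one]
      have h3 : w * ((Aev.card : ℝ) * (2 * k)) = (Aev.card : ℝ) * (w * (2 * k)) := by ring
      rw [h3, hw]
      linarith [hcount]
    refine ⟨hT, ?_⟩
    rw [Hf_min, hT]
    linarith [hw]

end AB

end KE

namespace KE

open Finset

/-- A non-even subset of `[1,n]` has a maximal run of odd cardinality. -/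
lemma exists_odd_run {n : ℕ} {S : Finset ℕ} (hS : S ⊆ Finset.Icc 1 n) (h : ¬ IsEvenSet S) :
    ∃ i j, 1 ≤ i ∧ i ≤ j ∧ j ≤ n ∧ Finset.Icc i j ⊆ S ∧ (i - 1) ∉ S ∧ (j + 1) ∉ S ∧
      Odd (j + 1 - i) := by
  by_contra hcon
  apply h
  obtain ⟨a, ha⟩ : ∃ a : ℕ → ℕ, ∀ s, a s = sInf {t | 1 ≤ t ∧ Finset.Icc t s ⊆ S} :=
    ⟨_, fun _ => rfl⟩
  obtain ⟨b, hb⟩ : ∃ b : ℕ → ℕ, ∀ s, b s = sSup {t | t ≤ n ∧ Finset.Icc s t ⊆ S} :=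
    ⟨_, fun _ => rfl⟩
  have key : ∀ s ∈ S, (1 ≤ a s ∧ b s ≤ n) ∧ (a s ≤ s ∧ s ≤ b s)
      ∧ Finset.Icc (a s) (b s) ⊆ S ∧ (a s - 1) ∉ S ∧ (b s + 1) ∉ S ∧ Even (b s + 1 - a s)
      ∧ (∀ c, 1 ≤ c → Finset.Icc c s ⊆ S → a s ≤ c)
      ∧ (∀ d, d ≤ n → Finset.Icc s d ⊆ S → d ≤ b s) := by
    intro s hs
    have hs1 : 1 ≤ s := (Finset.mem_Icc.1 (hS hs)).1
    have hsn : s ≤ n := (Finset.mem_Icc.1 (hS hs)).2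
    have hself : Finset.Icc s s ⊆ S := by
      intro t ht
      rcases Finset.mem_Icc.1 ht with ⟨h1, h2⟩
      have : t = s := le_antisymm h2 h1
      rwa [this]
    have hane : {t | 1 ≤ t ∧ Finset.Icc t s ⊆ S}.Nonempty := ⟨s, hs1, hself⟩
    have hamem : 1 ≤ a s ∧ Finset.Icc (a s) s ⊆ S := by rw [ha]; exact Nat.sInf_mem hane
    have hmin : ∀ c, 1 ≤ c → Finset.Icc c s ⊆ S → a s ≤ c := by
      intro c h1 h2; rw [ha]; exact Nat.sInf_le ⟨h1, h2⟩
    have hbdd : BddAbove {t | t ≤ n ∧ Finset.Icc s t ⊆ S} := ⟨n, fun t ht => ht.1⟩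
    have hbne : {t | t ≤ n ∧ Finset.Icc s t ⊆ S}.Nonempty := ⟨s, hsn, hself⟩
    have hbmem : b s ≤ n ∧ Finset.Icc s (b s) ⊆ S := by rw [hb]; exact Nat.sSup_mem hbne hbdd
    have hmax : ∀ d, d ≤ n → Finset.Icc s d ⊆ S → d ≤ b s := by
      intro d h1 h2; rw [hb]; exact le_csSup hbdd ⟨h1, h2⟩
    have hale : a s ≤ s := hmin s hs1 hself
    have hble : s ≤ b s := hmax s hsn hself
    have hrun : Finset.Icc (a s) (b s) ⊆ S := by
      intro t ht
      rcases Finset.mem_Icc.1 ht with ⟨ht1, ht2⟩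
      rcases le_or_gt t s with hts | hst'
      · exact hamem.2 (Finset.mem_Icc.2 ⟨ht1, hts⟩)
      · exact hbmem.2 (Finset.mem_Icc.2 ⟨hst'.le, ht2⟩)
    have hnotl : (a s - 1) ∉ S := by
      intro hmem
      have h1 : 1 ≤ a s - 1 := (Finset.mem_Icc.1 (hS hmem)).1
      have h2 : Finset.Icc (a s - 1) s ⊆ S := by
        intro t ht
        rcases Finset.mem_Icc.1 ht with ⟨ht1, ht2⟩
        rcases eq_or_lt_of_le ht1 with he | hlt
        · rwa [← he]
        · exact hamem.2 (Finset.mem_Icc.2 ⟨by omega, ht2⟩)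
      have := hmin (a s - 1) h1 h2
      omega
    have hnotr : (b s + 1) ∉ S := by
      intro hmem
      have h1 : b s + 1 ≤ n := (Finset.mem_Icc.1 (hS hmem)).2
      have h2 : Finset.Icc s (b s + 1) ⊆ S := by
        intro t ht
        rcases Finset.mem_Icc.1 ht with ⟨ht1, ht2⟩
        rcases eq_or_lt_of_le ht2 with he | hlt
        · rwa [he]
        · exact hbmem.2 (Finset.mem_Icc.2 ⟨ht1, by omega⟩)
      have := hmax (b s + 1) h1 h2
      omega
    have heven : Even (b s + 1 - a s) := by
      by_contra hodd
      rw [Nat.not_even_iff_odd] at hodd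
      exact hcon ⟨a s, b s, hamem.1, hale.trans hble, hbmem.1, hrun, hnotl, hnotr, hodd⟩
    exact ⟨⟨hamem.1, hbmem.1⟩, ⟨hale, hble⟩, hrun, hnotl, hnotr, heven, hmin, hmax⟩
  refine ⟨S.image (fun s => (a s, b s)), ?_, ?_, ?_⟩
  · ext t
    constructor
    · intro ht
      refine Finset.mem_biUnion.2 ⟨(a t, b t), Finset.mem_image.2 ⟨t, ht, rfl⟩, ?_⟩
      obtain ⟨-, ⟨h3, h4⟩, -⟩ := key t ht
      exact Finset.mem_Icc.2 ⟨h3, h4⟩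
    · intro ht
      obtain ⟨p, hp, htp⟩ := Finset.mem_biUnion.1 ht
      obtain ⟨s, hs, rfl⟩ := Finset.mem_image.1 hp
      obtain ⟨-, -, hrun, -⟩ := key s hs
      exact hrun htp
  · intro p hp
    obtain ⟨s, hs, rfl⟩ := Finset.mem_image.1 hp
    obtain ⟨-, ⟨h3, h4⟩, -, -, -, h7, -⟩ := key s hs
    exact ⟨h3.trans h4, h7⟩
  · intro p hp q hq hpq
    obtain ⟨s, hs, rfl⟩ := Finset.mem_image.1 hp
    obtain ⟨t, ht, rfl⟩ := Finset.mem_image.1 hq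
    rw [Finset.disjoint_left]
    intro u hu1 hu2
    rcases Finset.mem_Icc.1 hu1 with ⟨hu3, hu4⟩
    rcases Finset.mem_Icc.1 hu2 with ⟨hu5, hu6⟩
    obtain ⟨⟨hs1, hs2⟩, ⟨hs3, hs4⟩, hruns, -, -, -, hmins, hmaxs⟩ := key s hs
    obtain ⟨⟨ht1, ht2⟩, ⟨ht3, ht4⟩, hrunt, -, -, -, hmint, hmaxt⟩ := key t ht
    have h1 : a t ≤ a s := by
      refine hmint (a s) hs1 fun v hv => ?_
      rcases Finset.mem_Icc.1 hv with ⟨hv1, hv2⟩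
      rcases le_or_gt v u with hvu | huv
      · exact hruns (Finset.mem_Icc.2 ⟨hv1, hvu.trans hu4⟩)
      · exact hrunt (Finset.mem_Icc.2 ⟨by omega, hv2.trans ht4⟩)
    have h2 : a s ≤ a t := by
      refine hmins (a t) ht1 fun v hv => ?_
      rcases Finset.mem_Icc.1 hv with ⟨hv1, hv2⟩
      rcases le_or_gt v u with hvu | huv
      · exact hrunt (Finset.mem_Icc.2 ⟨hv1, hvu.trans hu6⟩)
      · exact hruns (Finset.mem_Icc.2 ⟨by omega, hv2.trans hs4⟩)
    have h3 : b s ≤ b t := by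
      refine hmaxt (b s) hs2 fun v hv => ?_
      rcases Finset.mem_Icc.1 hv with ⟨hv1, hv2⟩
      rcases le_or_gt v u with hvu | huv
      · exact hrunt (Finset.mem_Icc.2 ⟨ht3.trans hv1, hvu.trans hu6⟩)
      · exact hruns (Finset.mem_Icc.2 ⟨by omega, hv2⟩)
    have h4 : b t ≤ b s := by
      refine hmaxs (b t) ht2 fun v hv => ?_
      rcases Finset.mem_Icc.1 hv with ⟨hv1, hv2⟩
      rcases le_or_gt v u with hvu | huv
      · exact hruns (Finset.mem_Icc.2 ⟨hs3.trans hv1, hvu.trans hu4⟩)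
      · exact hrunt (Finset.mem_Icc.2 ⟨by omega, hv2⟩)
    exact hpq (by rw [le_antisymm h2 h1, le_antisymm h3 h4])

end KE

namespace KE

set_option linter.unusedSectionVars false

variable {P : Type} [PartialOrder P] [Fintype P]

lemma chain_injOn {ρ : P → ℕ} (hst : ∀ {a b : P}, a < b → ρ a < ρ b) {c : Finset P}
    (hc : IsChain (· ≤ ·) (c : Set P)) : Set.InjOn ρ ↑c := by
  intro u hu v hv he
  by_contra hne
  rcases hc hu hv hne with h | h
  · exact absurd he (Nat.ne_of_lt (hst (lt_of_le_of_ne h hne)))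
  · exact absurd he.symm (Nat.ne_of_lt (hst (lt_of_le_of_ne h (Ne.symm hne))))

end KE


set_option maxHeartbeats 1000000 in
/-- for a `k`-Eulerian poset, `L^{k,n+1}_S = 0` whenever `S` is not even. -/
theorem Lk_eq_zero_of_not_even {P : Type} [PartialOrder P] [BoundedOrder P] [Finite P]
    (n : ℕ) (ρ : P → ℕ) (k : ℝ) (hk : 0 < k) (hP : IsGraded P ρ n)
    (hE : IsKEulerian P ρ k) (S : Finset ℕ) (hS : S ⊆ Finset.Icc 1 n)
    (hnev : ¬ IsEvenSet S) :
    Lk k n ρ S = 0 := by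
  classical
  obtain ⟨hbot, htop, hcov⟩ := hP
  have hst : ∀ {u v : P}, u < v → ρ u < ρ v := fun {u v} h => KE.rank_strictMono hcov h
  obtain ⟨i, j, hi1, hij, hjn, hrun, hl, hr, hodd⟩ := KE.exists_odd_run hS hnev
  have hk0 : k ≠ 0 := ne_of_gt hk
  have hw : (-(1/(2*k))) * (2*k) = -1 := by field_simp
  simp only [Lk]
  set w : ℝ := -(1/(2*k)) with hwdef
  suffices hzero : ∑ T ∈ (Finset.Icc 1 n).powerset.filter (fun T => Finset.Icc 1 n \ S ⊆ T),
      w ^ T.card * (flagNum ρ T : ℝ) = 0 by rw [hzero, mul_zero]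
  set C : Finset (Finset P) := Finset.univ.filter
    (fun c => IsChain (· ≤ ·) (c : Set P) ∧ Finset.Icc 1 n \ S ⊆ c.image ρ ∧
      c.image ρ ⊆ Finset.Icc 1 n) with hCdef
  -- Step I: rewrite the flag-number sum as a sum over chains
  have hmaps : ∀ c ∈ C, c.image ρ ∈
      (Finset.Icc 1 n).powerset.filter (fun T => Finset.Icc 1 n \ S ⊆ T) := by
    intro c hc
    rw [hCdef, Finset.mem_filter] at hc
    exact Finset.mem_filter.2 ⟨Finset.mem_powerset.2 hc.2.2.2, hc.2.2.1⟩
  have hstep1 : ∑ T ∈ (Finset.Icc 1 n).powerset.filter (fun T => Finset.Icc 1 n \ S ⊆ T),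
      w ^ T.card * (flagNum ρ T : ℝ) = ∑ c ∈ C, w ^ c.card := by
    rw [← Finset.sum_fiberwise_of_maps_to hmaps (fun c => w ^ c.card)]
    refine Finset.sum_congr rfl fun T hT => ?_
    rcases Finset.mem_filter.1 hT with ⟨hT1, hT2⟩
    have hT3 : T ⊆ Finset.Icc 1 n := Finset.mem_powerset.1 hT1
    have hcardeq : flagNum ρ T = (C.filter (fun c => c.image ρ = T)).card := by
      rw [flagNum]
      congr 1
      ext c
      simp only [Finset.mem_filter, Finset.mem_univ, true_and, hCdef]
      constructor
      · rintro ⟨hch, heq, hcd⟩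
        refine ⟨⟨hch, ?_, ?_⟩, heq⟩
        · rw [heq]; exact hT2
        · rw [heq]; exact hT3
      · rintro ⟨⟨hch, hsd, him⟩, heq⟩
        refine ⟨hch, heq, ?_⟩
        have := Finset.card_image_of_injOn (KE.chain_injOn hst hch)
        rw [heq] at this
        omega
    have hconst : ∑ c ∈ C.filter (fun c => c.image ρ = T), w ^ c.card
        = ∑ c ∈ C.filter (fun c => c.image ρ = T), w ^ T.card := by
      refine Finset.sum_congr rfl fun c hc => ?_
      rcases Finset.mem_filter.1 hc with ⟨hcC, heq⟩
      rw [hCdef, Finset.mem_filter] at hcC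
      have := Finset.card_image_of_injOn (KE.chain_injOn hst hcC.2.1)
      rw [heq] at this
      rw [← this]
    rw [hconst, Finset.sum_const, nsmul_eq_mul, hcardeq]
    ring
  rw [hstep1]
  -- Step II: split each chain at the odd run
  set Cout : Finset (Finset P) := Finset.univ.filter
    (fun c => (IsChain (· ≤ ·) (c : Set P) ∧ Finset.Icc 1 n \ S ⊆ c.image ρ ∧
      c.image ρ ⊆ Finset.Icc 1 n) ∧ ∀ z ∈ c, ¬ ρ z ∈ Finset.Icc i j) with hCoutdef
  have houtmaps : ∀ c ∈ C, c.filter (fun z => ¬ ρ z ∈ Finset.Icc i j) ∈ Cout := by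
    intro c hc
    rw [hCdef, Finset.mem_filter] at hc
    obtain ⟨-, hch, hsd, him⟩ := hc
    rw [hCoutdef, Finset.mem_filter]
    refine ⟨Finset.mem_univ _, ⟨?_, ?_, ?_⟩, ?_⟩
    · exact hch.mono (by exact_mod_cast Finset.coe_subset.2 (Finset.filter_subset _ _))
    · intro m hm
      obtain ⟨z, hz, hzm⟩ := Finset.mem_image.1 (hsd hm)
      refine Finset.mem_image.2 ⟨z, Finset.mem_filter.2 ⟨hz, ?_⟩, hzm⟩
      intro hmem
      rw [hzm] at hmem
      exact (Finset.mem_sdiff.1 hm).2 (hrun hmem)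
    · exact fun m hm => him (Finset.image_subset_image (Finset.filter_subset _ _) hm)
    · intro z hz
      exact (Finset.mem_filter.1 hz).2
  rw [← Finset.sum_fiberwise_of_maps_to houtmaps (fun c => w ^ c.card)]
  refine Finset.sum_eq_zero fun c₀ hc₀ => ?_
  rw [hCoutdef, Finset.mem_filter] at hc₀
  obtain ⟨-, ⟨hch₀, hsd₀, him₀⟩, hnr₀⟩ := hc₀
  -- the lower endpoint of the gap interval
  have hxex : ∃ x : P, ρ x = i - 1
      ∧ (∀ u ∈ c₀, ρ u < i → u ≤ x)
      ∧ (∀ z : P, (∀ u ∈ c₀, u ≠ z → u ≤ z ∨ z ≤ u) → i ≤ ρ z → x < z)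
      ∧ (∀ u ∈ c₀, u ≠ x → u ≤ x ∨ x ≤ u) := by
    by_cases hi2 : 2 ≤ i
    · have hm : i - 1 ∈ Finset.Icc 1 n \ S :=
        Finset.mem_sdiff.2 ⟨Finset.mem_Icc.2 ⟨by omega, by omega⟩, hl⟩
      obtain ⟨x, hxc, hxr⟩ := Finset.mem_image.1 (hsd₀ hm)
      refine ⟨x, hxr, ?_, ?_, ?_⟩
      · intro u hu hui
        rcases eq_or_ne u x with rfl | hne
        · exact le_rfl
        rcases hch₀ (Finset.mem_coe.2 hu) (Finset.mem_coe.2 hxc) hne with h | h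
        · exact h
        · exfalso
          have := hst (lt_of_le_of_ne h (Ne.symm hne))
          omega
      · intro z hcomp hz
        have hne : x ≠ z := by intro he; rw [he] at hxr; omega
        rcases hcomp x hxc hne with h | h
        · exact lt_of_le_of_ne h hne
        · exfalso
          rcases eq_or_ne z x with rfl | hne'
          · exact hne rfl
          · have := hst (lt_of_le_of_ne h hne')
            omega
      · intro u hu hne
        exact hch₀ (Finset.mem_coe.2 hu) (Finset.mem_coe.2 hxc) hne
    · refine ⟨⊥, by rw [hbot]; omega, ?_, ?_, fun u _ _ => Or.inr bot_le⟩
      · intro u hu hui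
        exfalso
        have : ρ u ∈ Finset.Icc 1 n := him₀ (Finset.mem_image.2 ⟨u, hu, rfl⟩)
        rw [Finset.mem_Icc] at this
        omega
      · intro z _ hz
        have hzb : z ≠ ⊥ := by intro he; rw [he, hbot] at hz; omega
        exact hzb.bot_lt
  -- the upper endpoint of the gap interval
  have hyex : ∃ y : P, ρ y = j + 1
      ∧ (∀ u ∈ c₀, j < ρ u → y ≤ u)
      ∧ (∀ z : P, (∀ u ∈ c₀, u ≠ z → u ≤ z ∨ z ≤ u) → ρ z ≤ j → z < y)
      ∧ (∀ u ∈ c₀, u ≠ y → u ≤ y ∨ y ≤ u) := by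
    by_cases hjn2 : j + 1 ≤ n
    · have hm : j + 1 ∈ Finset.Icc 1 n \ S :=
        Finset.mem_sdiff.2 ⟨Finset.mem_Icc.2 ⟨by omega, hjn2⟩, hr⟩
      obtain ⟨y, hyc, hyr⟩ := Finset.mem_image.1 (hsd₀ hm)
      refine ⟨y, hyr, ?_, ?_, ?_⟩
      · intro u hu hui
        rcases eq_or_ne u y with rfl | hne
        · exact le_rfl
        rcases hch₀ (Finset.mem_coe.2 hu) (Finset.mem_coe.2 hyc) hne with h | h
        · exfalso
          have := hst (lt_of_le_of_ne h hne)
          omega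
        · exact h
      · intro z hcomp hz
        have hne : z ≠ y := by intro he; rw [he, hyr] at hz; omega
        rcases hcomp y hyc (Ne.symm hne) with h | h
        · exfalso
          have := hst (lt_of_le_of_ne h (Ne.symm hne))
          omega
        · exact lt_of_le_of_ne h hne
      · intro u hu hne
        exact hch₀ (Finset.mem_coe.2 hu) (Finset.mem_coe.2 hyc) hne
    · refine ⟨⊤, by rw [htop]; omega, ?_, ?_, fun u _ _ => Or.inl le_top⟩
      · intro u hu hui
        exfalso
        have : ρ u ∈ Finset.Icc 1 n := him₀ (Finset.mem_image.2 ⟨u, hu, rfl⟩)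
        rw [Finset.mem_Icc] at this
        omega
      · intro z _ hz
        have hzt : z ≠ ⊤ := by intro he; rw [he, htop] at hz; omega
        exact hzt.lt_top
  obtain ⟨x, hxr, hx2, hx3, hx4⟩ := hxex
  obtain ⟨y, hyr, hy2, hy3, hy4⟩ := hyex
  have hxy : x < y := hx3 y hy4 (by omega)
  have heven : Even (ρ y - ρ x) := by
    obtain ⟨t, ht⟩ := hodd
    exact ⟨t + 1, by omega⟩
  have hH0 : KE.Hf w x y = 0 :=
    (KE.AB (fun {a b} h => hst h) hE hw (ρ y - ρ x) heven x y hxy rfl).2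
  -- facts about chains of the gap interval
  have hdr : ∀ d ∈ KE.Ch x y, ∀ z ∈ d, i ≤ ρ z ∧ ρ z ≤ j := by
    intro d hd z hz
    rcases (KE.mem_Ch.1 hd).2 z hz with ⟨h1, h2⟩
    have e1 := hst h1
    have e2 := hst h2
    omega
  -- the bijection between the fiber over c₀ and chains of the gap interval
  have hbij : ∑ c ∈ C.filter (fun c => c.filter (fun z => ¬ ρ z ∈ Finset.Icc i j) = c₀),
      w ^ c.card = ∑ d ∈ KE.Ch x y, w ^ (c₀.card + d.card) := by
    refine Finset.sum_nbij' (fun c => c.filter (fun z => ρ z ∈ Finset.Icc i j))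
      (fun d => c₀ ∪ d) ?_ ?_ ?_ ?_ ?_
    · -- maps fiber to Ch x y
      intro c hc
      rcases Finset.mem_filter.1 hc with ⟨hcC, hout⟩
      rw [hCdef, Finset.mem_filter] at hcC
      obtain ⟨-, hch, hsd, him⟩ := hcC
      have hc₀sub : c₀ ⊆ c := by rw [← hout]; exact Finset.filter_subset _ _
      refine KE.mem_Ch.2 ⟨hch.mono
        (by exact_mod_cast Finset.coe_subset.2 (Finset.filter_subset _ _)), ?_⟩
      intro z hz
      rcases Finset.mem_filter.1 hz with ⟨hzc, hzr⟩
      rw [Finset.mem_Icc] at hzr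
      constructor
      · refine hx3 z (fun u hu hne => ?_) hzr.1
        exact hch (Finset.mem_coe.2 (hc₀sub hu)) (Finset.mem_coe.2 hzc) hne
      · refine hy3 z (fun u hu hne => ?_) hzr.2
        exact hch (Finset.mem_coe.2 (hc₀sub hu)) (Finset.mem_coe.2 hzc) hne
    · -- maps Ch x y to the fiber
      intro d hd
      rcases KE.mem_Ch.1 hd with ⟨hchd, hmemd⟩
      have hcross : ∀ u ∈ c₀, ∀ z ∈ d, u ≤ z ∨ z ≤ u := by
        intro u hu z hz
        have hur := hnr₀ u hu
        rw [Finset.mem_Icc] at hur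
        rcases hdr d hd z hz with ⟨hz1, hz2⟩
        rcases lt_or_ge (ρ u) i with h | h
        · exact Or.inl ((hx2 u hu h).trans (hmemd z hz).1.le)
        · have hju : j < ρ u := by omega
          exact Or.inr ((hmemd z hz).2.le.trans (hy2 u hu hju))
      refine Finset.mem_filter.2 ⟨?_, ?_⟩
      · rw [hCdef, Finset.mem_filter]
        refine ⟨Finset.mem_univ _, ?_, ?_, ?_⟩
        · -- chain
          intro u hu v hv hne
          rw [Finset.coe_union, Set.mem_union] at hu hv
          rcases hu with hu | hu <;> rcases hv with hv | hv
          · exact hch₀ hu hv hne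
          · exact hcross u (Finset.mem_coe.1 hu) v (Finset.mem_coe.1 hv)
          · exact (hcross v (Finset.mem_coe.1 hv) u (Finset.mem_coe.1 hu)).symm
          · exact hchd hu hv hne
        · intro m hm
          obtain ⟨z, hz, hzm⟩ := Finset.mem_image.1 (hsd₀ hm)
          exact Finset.mem_image.2 ⟨z, Finset.mem_union_left _ hz, hzm⟩
        · intro m hm
          obtain ⟨z, hz, hzm⟩ := Finset.mem_image.1 hm
          rcases Finset.mem_union.1 hz with hz | hz
          · exact him₀ (Finset.mem_image.2 ⟨z, hz, hzm⟩)
          · rcases hdr d hd z hz with ⟨h1, h2⟩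
            rw [← hzm]
            exact Finset.mem_Icc.2 ⟨by omega, by omega⟩
      · -- out (c₀ ∪ d) = c₀
        ext z
        rw [Finset.mem_filter, Finset.mem_union]
        constructor
        · rintro ⟨hz | hz, hzr⟩
          · exact hz
          · exfalso
            rcases hdr d hd z hz with ⟨h1, h2⟩
            exact hzr (Finset.mem_Icc.2 ⟨h1, h2⟩)
        · intro hz
          exact ⟨Or.inl hz, hnr₀ z hz⟩
    · -- left inverse
      intro c hc
      rcases Finset.mem_filter.1 hc with ⟨-, hout⟩
      show c₀ ∪ c.filter (fun z => ρ z ∈ Finset.Icc i j) = c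
      rw [← hout, Finset.union_comm]
      exact Finset.filter_union_filter_not_eq _ c
    · -- right inverse
      intro d hd
      ext z
      rw [Finset.mem_filter, Finset.mem_union]
      constructor
      · rintro ⟨hz | hz, hzr⟩
        · exact absurd hzr (hnr₀ z hz)
        · exact hz
      · intro hz
        rcases hdr d hd z hz with ⟨h1, h2⟩
        exact ⟨Or.inr hz, Finset.mem_Icc.2 ⟨h1, h2⟩⟩
    · -- weights
      intro c hc
      rcases Finset.mem_filter.1 hc with ⟨-, hout⟩
      show w ^ c.card = w ^ (c₀.card + (c.filter (fun z => ρ z ∈ Finset.Icc i j)).card)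
      have h2 := Finset.card_filter_add_card_filter_not
        (s := c) (fun z => ρ z ∈ Finset.Icc i j)
      rw [hout] at h2
      congr 1
      omega
  rw [hbij]
  have hfac : ∑ d ∈ KE.Ch x y, w ^ (c₀.card + d.card) = w ^ c₀.card * KE.Hf w x y := by
    rw [KE.Hf, Finset.mul_sum]
    exact Finset.sum_congr rfl fun d _ => pow_add w _ _
  rw [hfac, hH0, mul_zero]
end

section
/- For a graded poset P of rank m+n+2, subsets S ⊆ [1,m] and T ⊆ [1,n], we have ∑_{x ∈ P, ρ(x)=m+1} L^{k,m+1}_S([0̂,x]) · L^{k,n+1}_T([x,1̂]) = 2k · L^{k,m+n+2}_{S ∪ (T+m+1)}(P), where T+m+1 = {t+m+1 : t ∈ T}. -/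
open scoped Classical

attribute [local instance] Fintype.ofFinite

lemma rank_strictMono {P : Type} [PartialOrder P] [Finite P] {ρ : P → ℕ}
    (hcov : ∀ x y : P, x ⋖ y → ρ y = ρ x + 1) :
    ∀ y x : P, x < y → ρ x < ρ y := by
  have : WellFoundedLT P := Finite.to_wellFoundedLT
  intro y
  induction y using WellFoundedLT.induction with
  | ind y IH =>
    intro x hxy
    by_cases hc : x ⋖ y
    · rw [hcov x y hc]; omega
    · have hne : (Finset.univ.filter fun z => x < z ∧ z < y).Nonempty := by
        rcases (not_covBy_iff hxy).mp hc with ⟨z, hz1, hz2⟩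
        exact ⟨z, by simp [hz1, hz2]⟩
      obtain ⟨z, hz, hmax⟩ : ∃ z ∈ (Finset.univ.filter fun z => x < z ∧ z < y), ∀ w ∈ (Finset.univ.filter fun z => x < z ∧ z < y), ¬ z < w := by
        obtain ⟨z, hz⟩ := Finset.exists_maximal hne
        exact ⟨z, hz.1, fun w hw h => lt_irrefl z (h.trans_le (hz.2 hw h.le))⟩
      simp only [Finset.mem_filter, Finset.mem_univ, true_and] at hz
      have hzy : z ⋖ y := by
        refine ⟨hz.2, fun w hw1 hw2 => hmax w ?_ hw1⟩
        simp only [Finset.mem_filter, Finset.mem_univ, true_and]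
        exact ⟨hz.1.trans hw1, hw2⟩
      have := IH z hz.2 x hz.1
      rw [hcov z y hzy]; omega

lemma flag_conv {P : Type} [PartialOrder P] [BoundedOrder P] [Finite P]
    (m n : ℕ) (ρ : P → ℕ) (hP : IsGraded P ρ (m + n + 1))
    (A B : Finset ℕ) (hA : A ⊆ Finset.Icc 1 m) (hB : B ⊆ Finset.Icc 1 n) :
    ∑ x ∈ Finset.univ.filter (fun x : P => ρ x = m + 1),
        flagNumI ρ ⊥ x A * flagNumI ρ x ⊤ B
      = flagNum ρ (insert (m + 1) (A ∪ B.image fun b => b + (m + 1))) := by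
  have hmono : ∀ x y : P, x < y → ρ x < ρ y := fun x y h => rank_strictMono hP.2.2 y x h
  have hbot : ρ (⊥ : P) = 0 := hP.1
  have hAm : ∀ a ∈ A, 1 ≤ a ∧ a ≤ m := fun a ha => Finset.mem_Icc.mp (hA ha)
  have hBm : ∀ b ∈ B, 1 ≤ b ∧ b ≤ n := fun b hb => Finset.mem_Icc.mp (hB hb)
  set U : Finset ℕ := insert (m + 1) (A ∪ B.image fun b => b + (m + 1)) with hU
  have hUmem : ∀ u, u ∈ U ↔ (u = m + 1 ∨ u ∈ A ∨ ∃ b ∈ B, b + (m + 1) = u) := by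
    intro u; simp [hU]
  have hnotmem : m + 1 ∉ A ∪ Finset.image (fun b => b + (m + 1)) B := by
    intro h
    rcases Finset.mem_union.mp h with h | h
    · have := hAm _ h; omega
    · obtain ⟨b, hb, hba⟩ := Finset.mem_image.mp h
      have := hBm b hb; omega
  have hdisjAB : Disjoint A (Finset.image (fun b => b + (m + 1)) B) := by
    rw [Finset.disjoint_left]
    intro a ha ha'
    obtain ⟨b, hb, hba⟩ := Finset.mem_image.mp ha'
    have := hAm a ha; have := hBm b hb; omega
  have hUcard : U.card = A.card + B.card + 1 := by
    rw [hU, Finset.card_insert_of_notMem hnotmem, Finset.card_union_of_disjoint hdisjAB,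
      Finset.card_image_of_injective _ (add_left_injective _)]
  -- rewrite each product as the card of a product set
  have step : ∀ x : P,
      flagNumI ρ ⊥ x A * flagNumI ρ x ⊤ B
        = (((Finset.univ.filter fun c : Finset P =>
            IsChain (· ≤ ·) (c : Set P) ∧ (∀ z ∈ c, ⊥ < z ∧ z < x) ∧
              c.image (fun z => ρ z - ρ ⊥) = A ∧ c.card = A.card) ×ˢ
          (Finset.univ.filter fun c : Finset P =>
            IsChain (· ≤ ·) (c : Set P) ∧ (∀ z ∈ c, x < z ∧ z < ⊤) ∧
              c.image (fun z => ρ z - ρ x) = B ∧ c.card = B.card)).card) := by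
    intro x; rw [Finset.card_product]; rfl
  calc ∑ x ∈ Finset.univ.filter (fun x : P => ρ x = m + 1),
        flagNumI ρ ⊥ x A * flagNumI ρ x ⊤ B
      = ((Finset.univ.filter fun x : P => ρ x = m + 1).sigma (fun x =>
          (Finset.univ.filter fun c : Finset P =>
            IsChain (· ≤ ·) (c : Set P) ∧ (∀ z ∈ c, ⊥ < z ∧ z < x) ∧
              c.image (fun z => ρ z - ρ ⊥) = A ∧ c.card = A.card) ×ˢ
          (Finset.univ.filter fun c : Finset P =>
            IsChain (· ≤ ·) (c : Set P) ∧ (∀ z ∈ c, x < z ∧ z < ⊤) ∧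
              c.image (fun z => ρ z - ρ x) = B ∧ c.card = B.card))).card := by
        rw [Finset.card_sigma]; exact Finset.sum_congr rfl fun x _ => step x
    _ = flagNum ρ U := by
        rw [flagNum]
        apply Finset.card_bij (fun p _ => insert p.1 (p.2.1 ∪ p.2.2))
        · -- maps into target
          rintro ⟨x, c₁, c₂⟩ hp
          rw [Finset.mem_sigma, Finset.mem_product] at hp
          obtain ⟨hx, h1, h2⟩ := hp
          simp only [Finset.mem_filter, Finset.mem_univ, true_and] at hx h1 h2 ⊢
          obtain ⟨hc1chain, hc1mem, hc1img, hc1card⟩ := h1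
          obtain ⟨hc2chain, hc2mem, hc2img, hc2card⟩ := h2
          have himg1 : c₁.image ρ = A := by
            rw [← hc1img]; apply Finset.image_congr; intro z _; simp [hbot]
          have hrk1 : ∀ z ∈ c₁, ρ z ≤ m := by
            intro z hz
            have : ρ z ∈ A := himg1 ▸ Finset.mem_image_of_mem ρ hz
            exact (hAm _ this).2
          have hrk2 : ∀ z ∈ c₂, m + 2 ≤ ρ z := by
            intro z hz
            have := hmono x z (hc2mem z hz).1; omega
          have himg2 : c₂.image ρ = B.image fun b => b + (m + 1) := by
            ext u
            simp only [Finset.mem_image]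
            constructor
            · rintro ⟨z, hz, rfl⟩
              refine ⟨ρ z - ρ x, ?_, ?_⟩
              · rw [← hc2img]; exact Finset.mem_image_of_mem _ hz
              · have := hrk2 z hz; rw [hx]; omega
            · rintro ⟨b, hb, rfl⟩
              have : b ∈ c₂.image fun z => ρ z - ρ x := hc2img ▸ hb
              obtain ⟨z, hz, hzb⟩ := Finset.mem_image.mp this
              refine ⟨z, hz, ?_⟩
              rw [hx] at hzb
              have := hrk2 z hz; omega
          have hxnot : x ∉ c₁ ∪ c₂ := by
            intro h
            rcases Finset.mem_union.mp h with h | h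
            · have := hrk1 x h; omega
            · have := hrk2 x h; omega
          have hdisj : Disjoint c₁ c₂ := by
            rw [Finset.disjoint_left]
            intro z hz1 hz2
            have := hrk1 z hz1; have := hrk2 z hz2; omega
          refine ⟨?_, ?_, ?_⟩
          · -- chain
            intro a ha b hb hne
            simp only [Finset.coe_insert, Set.mem_insert_iff, Finset.coe_union,
              Set.mem_union, Finset.mem_coe] at ha hb
            rcases ha with rfl | ha | ha
            · rcases hb with rfl | hb | hb
              · exact absurd rfl hne
              · exact Or.inr (hc1mem b hb).2.le
              · exact Or.inl (hc2mem b hb).1.le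
            · rcases hb with rfl | hb | hb
              · exact Or.inl (hc1mem a ha).2.le
              · exact hc1chain ha hb hne
              · exact Or.inl ((hc1mem a ha).2.trans (hc2mem b hb).1).le
            · rcases hb with rfl | hb | hb
              · exact Or.inr (hc2mem a ha).1.le
              · exact Or.inr ((hc1mem b hb).2.trans (hc2mem a ha).1).le
              · exact hc2chain ha hb hne
          · rw [Finset.image_insert, Finset.image_union, himg1, himg2, hx]
          · rw [Finset.card_insert_of_notMem hxnot, Finset.card_union_of_disjoint hdisj,
              hc1card, hc2card, hUcard]
        · -- injective
          rintro ⟨x, c₁, c₂⟩ hp ⟨x', c₁', c₂'⟩ hp' heq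
          rw [Finset.mem_sigma, Finset.mem_product] at hp hp'
          obtain ⟨hx, h1, h2⟩ := hp
          obtain ⟨hx', h1', h2'⟩ := hp'
          simp only [Finset.mem_filter, Finset.mem_univ, true_and] at hx h1 h2 hx' h1' h2'
          have hrk1 : ∀ z ∈ c₁, ρ z ≤ m := by
            intro z hz
            have himg1 : c₁.image ρ = A := by
              rw [← h1.2.2.1]; apply Finset.image_congr; intro z _; simp [hbot]
            have : ρ z ∈ A := himg1 ▸ Finset.mem_image_of_mem ρ hz
            exact (hAm _ this).2
          have hrk1' : ∀ z ∈ c₁', ρ z ≤ m := by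
            intro z hz
            have himg1 : c₁'.image ρ = A := by
              rw [← h1'.2.2.1]; apply Finset.image_congr; intro z _; simp [hbot]
            have : ρ z ∈ A := himg1 ▸ Finset.mem_image_of_mem ρ hz
            exact (hAm _ this).2
          have hrk2 : ∀ z ∈ c₂, m + 2 ≤ ρ z := by
            intro z hz; have := hmono x z (h2.2.1 z hz).1; omega
          have hrk2' : ∀ z ∈ c₂', m + 2 ≤ ρ z := by
            intro z hz; have := hmono x' z (h2'.2.1 z hz).1; omega
          have hxx : x = x' := by
            have : x' ∈ insert x (c₁ ∪ c₂) := by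
              rw [heq]; exact Finset.mem_insert_self _ _
            rcases Finset.mem_insert.mp this with h | h
            · exact h.symm
            · rcases Finset.mem_union.mp h with h | h
              · have := hrk1 x' h; omega
              · have := hrk2 x' h; omega
          subst hxx
          have hc1 : c₁ = c₁' := by
            ext z
            constructor
            · intro hz
              have : z ∈ insert x (c₁' ∪ c₂') := by
                rw [← heq]; exact Finset.mem_insert_of_mem (Finset.mem_union_left _ hz)
              rcases Finset.mem_insert.mp this with rfl | h
              · have := hrk1 z hz; omega
              · rcases Finset.mem_union.mp h with h | h
                · exact h
                · have := hrk1 z hz; have := hrk2' z h; omega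
            · intro hz
              have : z ∈ insert x (c₁ ∪ c₂) := by
                rw [heq]; exact Finset.mem_insert_of_mem (Finset.mem_union_left _ hz)
              rcases Finset.mem_insert.mp this with rfl | h
              · have := hrk1' z hz; omega
              · rcases Finset.mem_union.mp h with h | h
                · exact h
                · have := hrk1' z hz; have := hrk2 z h; omega
          have hc2 : c₂ = c₂' := by
            ext z
            constructor
            · intro hz
              have : z ∈ insert x (c₁' ∪ c₂') := by
                rw [← heq]; exact Finset.mem_insert_of_mem (Finset.mem_union_right _ hz)
              rcases Finset.mem_insert.mp this with rfl | h
              · have := hrk2 z hz; omega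
              · rcases Finset.mem_union.mp h with h | h
                · have := hrk2 z hz; have := hrk1' z h; omega
                · exact h
            · intro hz
              have : z ∈ insert x (c₁ ∪ c₂) := by
                rw [heq]; exact Finset.mem_insert_of_mem (Finset.mem_union_right _ hz)
              rcases Finset.mem_insert.mp this with rfl | h
              · have := hrk2' z hz; omega
              · rcases Finset.mem_union.mp h with h | h
                · have := hrk2' z hz; have := hrk1 z h; omega
                · exact h
          simp [hc1, hc2]
        · -- surjective
          intro c hc
          simp only [Finset.mem_filter, Finset.mem_univ, true_and] at hc
          obtain ⟨hchain, himg, hcard⟩ := hc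
          have hinj : Set.InjOn ρ (c : Set P) := by
            rw [← Finset.card_image_iff]; rw [himg, ← hcard]
          have hx : ∃ x ∈ c, ρ x = m + 1 := by
            have : m + 1 ∈ c.image ρ := by rw [himg]; exact Finset.mem_insert_self _ _
            obtain ⟨x, hx, hx'⟩ := Finset.mem_image.mp this
            exact ⟨x, hx, hx'⟩
          obtain ⟨x, hxc, hxr⟩ := hx
          have hrkU : ∀ z ∈ c, ρ z = m + 1 ∨ (ρ z ∈ A ∧ ρ z ≤ m) ∨
              (m + 2 ≤ ρ z ∧ ρ z - (m+1) ∈ B) := by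
            intro z hz
            have : ρ z ∈ U := himg ▸ Finset.mem_image_of_mem ρ hz
            rcases (hUmem _).mp this with h | h | ⟨b, hb, hbe⟩
            · exact Or.inl h
            · exact Or.inr (Or.inl ⟨h, (hAm _ h).2⟩)
            · have := hBm b hb
              refine Or.inr (Or.inr ⟨by omega, ?_⟩)
              have : ρ z - (m+1) = b := by omega
              rw [this]; exact hb
          set c₁ := c.filter (fun z => ρ z ≤ m) with hc₁
          set c₂ := c.filter (fun z => m + 2 ≤ ρ z) with hc₂
          have hc1sub : c₁ ⊆ c := Finset.filter_subset _ _
          have hc2sub : c₂ ⊆ c := Finset.filter_subset _ _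
          have hcomp : ∀ z ∈ c, ∀ w ∈ c, ρ z < ρ w → z < w := by
            intro z hz w hw hlt
            have hne : z ≠ w := fun h => by subst h; omega
            rcases hchain hz hw hne with h | h
            · exact lt_of_le_of_ne h hne
            · have := hmono w z (lt_of_le_of_ne h hne.symm); omega
          refine ⟨⟨x, c₁, c₂⟩, ?_, ?_⟩
          · rw [Finset.mem_sigma, Finset.mem_product]
            refine ⟨by simp [hxr], ?_, ?_⟩
            · simp only [Finset.mem_filter, Finset.mem_univ, true_and]
              have himg1 : c₁.image ρ = A := by
                ext u
                simp only [Finset.mem_image, hc₁, Finset.mem_filter]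
                constructor
                · rintro ⟨z, ⟨hz, hzm⟩, rfl⟩
                  rcases hrkU z hz with h | ⟨h, _⟩ | ⟨h, _⟩
                  · omega
                  · exact h
                  · omega
                · intro hu
                  have : u ∈ c.image ρ := by
                    rw [himg, hUmem]; exact Or.inr (Or.inl hu)
                  obtain ⟨z, hz, rfl⟩ := Finset.mem_image.mp this
                  exact ⟨z, ⟨hz, (hAm _ hu).2⟩, rfl⟩
              refine ⟨hchain.mono (by exact_mod_cast hc1sub), ?_, ?_, ?_⟩
              · intro z hz
                have hzc := hc1sub hz
                have hzm : ρ z ≤ m := (Finset.mem_filter.mp hz).2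
                constructor
                · have hzA : ρ z ∈ A := himg1 ▸ Finset.mem_image_of_mem ρ hz
                  have h1 : 1 ≤ ρ z := (hAm _ hzA).1
                  refine lt_of_le_of_ne bot_le fun h => ?_
                  rw [← h, hbot] at h1; omega
                · exact hcomp z hzc x hxc (by omega)
              · rw [← himg1]; apply Finset.image_congr; intro z _; simp [hbot]
              · rw [← himg1]
                exact (Finset.card_image_of_injOn (hinj.mono (by exact_mod_cast hc1sub))).symm
            · simp only [Finset.mem_filter, Finset.mem_univ, true_and]
              have himg2 : c₂.image (fun z => ρ z - ρ x) = B := by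
                ext u
                simp only [Finset.mem_image, hc₂, Finset.mem_filter, hxr]
                constructor
                · rintro ⟨z, ⟨hz, hzm⟩, rfl⟩
                  rcases hrkU z hz with h | ⟨_, h⟩ | ⟨_, h⟩
                  · omega
                  · omega
                  · exact h
                · intro hu
                  have h1 := hBm u hu
                  have : u + (m+1) ∈ c.image ρ := by
                    rw [himg, hUmem]; exact Or.inr (Or.inr ⟨u, hu, rfl⟩)
                  obtain ⟨z, hz, hze⟩ := Finset.mem_image.mp this
                  exact ⟨z, ⟨hz, by omega⟩, by omega⟩
              refine ⟨hchain.mono (by exact_mod_cast hc2sub), ?_, himg2, ?_⟩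
              · intro z hz
                have hzc := hc2sub hz
                have hzm : m + 2 ≤ ρ z := (Finset.mem_filter.mp hz).2
                constructor
                · exact hcomp x hxc z hzc (by omega)
                · refine lt_of_le_of_ne le_top fun hzt' => ?_
                  have hzt : ρ z = m + n + 2 := by rw [hzt', hP.2.1]
                  have h2 : ρ z - (m+1) ∈ B := by
                    rcases hrkU z hzc with h | ⟨_, h⟩ | ⟨_, h⟩
                    · omega
                    · omega
                    · exact h
                  have := hBm _ h2
                  omega
              · rw [← himg2]
                refine (Finset.card_image_of_injOn ?_).symm
                intro z hz w hw h
                have h' : ρ z - ρ x = ρ w - ρ x := h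
                have hz2 : m + 2 ≤ ρ z := (Finset.mem_filter.mp (Finset.mem_coe.mp hz)).2
                have hw2 : m + 2 ≤ ρ w := (Finset.mem_filter.mp (Finset.mem_coe.mp hw)).2
                have hzw : ρ z = ρ w := by rw [hxr] at h'; omega
                exact hinj (hc2sub (Finset.mem_coe.mp hz)) (hc2sub (Finset.mem_coe.mp hw)) hzw
          · ext z
            simp only [Finset.mem_insert, Finset.mem_union, hc₁, hc₂, Finset.mem_filter]
            constructor
            · rintro (rfl | ⟨hz, _⟩ | ⟨hz, _⟩)
              · exact hxc
              · exact hz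
              · exact hz
            · intro hz
              rcases hrkU z hz with h | ⟨_, h⟩ | ⟨h, _⟩
              · exact Or.inl (hinj hz hxc (by omega))
              · exact Or.inr (Or.inl ⟨hz, h⟩)
              · exact Or.inr (Or.inr ⟨hz, h⟩)

lemma eU_card (m n : ℕ) {A B : Finset ℕ} (hA : A ⊆ Finset.Icc 1 m) (hB : B ⊆ Finset.Icc 1 n) :
    (insert (m + 1) (A ∪ B.image fun b => b + (m + 1))).card = A.card + B.card + 1 := by
  have hAm : ∀ a ∈ A, 1 ≤ a ∧ a ≤ m := fun a ha => Finset.mem_Icc.mp (hA ha)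
  have hBm : ∀ b ∈ B, 1 ≤ b ∧ b ≤ n := fun b hb => Finset.mem_Icc.mp (hB hb)
  have hnm : m + 1 ∉ A ∪ B.image fun b => b + (m + 1) := by
    intro h
    rcases Finset.mem_union.mp h with h | h
    · have := hAm _ h; omega
    · obtain ⟨b, hb, hba⟩ := Finset.mem_image.mp h
      have := hBm b hb; omega
  have hd : Disjoint A (B.image fun b => b + (m + 1)) := by
    rw [Finset.disjoint_left]
    intro a ha ha'
    obtain ⟨b, hb, hba⟩ := Finset.mem_image.mp ha'
    have := hAm a ha; have := hBm b hb; omega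
  rw [Finset.card_insert_of_notMem hnm, Finset.card_union_of_disjoint hd,
    Finset.card_image_of_injective _ (add_left_injective _)]


/-- the convolution identity for flag `L^k`-vectors. -/
theorem Lk_convolution {P : Type} [PartialOrder P] [BoundedOrder P] [Finite P]
    (m n : ℕ) (ρ : P → ℕ) (k : ℝ) (hk : 0 < k) (hP : IsGraded P ρ (m + n + 1))
    (S T : Finset ℕ) (hS : S ⊆ Finset.Icc 1 m) (hT : T ⊆ Finset.Icc 1 n) :
    ∑ x ∈ Finset.univ.filter (fun x : P => ρ x = m + 1),
        LkI k m ρ ⊥ x S * LkI k n ρ x ⊤ T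
      = 2 * k * Lk k (m + n + 1) ρ (S ∪ T.image (fun t => t + (m + 1))) := by
  classical
  have hSm : S.card ≤ m := by
    have := Finset.card_le_card hS; rw [Nat.card_Icc] at this; omega
  have hTn : T.card ≤ n := by
    have := Finset.card_le_card hT; rw [Nat.card_Icc] at this; omega
  have hSb : ∀ a ∈ S, 1 ≤ a ∧ a ≤ m := fun a ha => Finset.mem_Icc.mp (hS ha)
  have hTb : ∀ t ∈ T, 1 ≤ t ∧ t ≤ n := fun t ht => Finset.mem_Icc.mp (hT ht)
  have hSTcard : (S ∪ T.image (fun t => t + (m + 1))).card = S.card + T.card := by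
    have hd : Disjoint S (T.image fun t => t + (m + 1)) := by
      rw [Finset.disjoint_left]
      intro a ha ha'
      obtain ⟨t, ht, hte⟩ := Finset.mem_image.mp ha'
      have := hSb a ha; have := hTb t ht; omega
    rw [Finset.card_union_of_disjoint hd,
      Finset.card_image_of_injective _ (add_left_injective _)]
  have key : ∀ A ∈ (Finset.Icc 1 m).powerset.filter (fun A => Finset.Icc 1 m \ S ⊆ A),
      ∀ B ∈ (Finset.Icc 1 n).powerset.filter (fun B => Finset.Icc 1 n \ T ⊆ B),
      ∑ x ∈ Finset.univ.filter (fun x : P => ρ x = m + 1),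
          (flagNumI ρ ⊥ x A : ℝ) * (flagNumI ρ x ⊤ B : ℝ)
        = (flagNum ρ (insert (m + 1) (A ∪ B.image fun b => b + (m + 1))) : ℝ) := by
    intro A hA' B hB'
    have h1 : A ⊆ Finset.Icc 1 m := Finset.mem_powerset.mp (Finset.mem_filter.mp hA').1
    have h2 : B ⊆ Finset.Icc 1 n := Finset.mem_powerset.mp (Finset.mem_filter.mp hB').1
    exact_mod_cast flag_conv m n ρ hP A B h1 h2
  have lhs_eq :
      ∑ x ∈ Finset.univ.filter (fun x : P => ρ x = m + 1),
          LkI k m ρ ⊥ x S * LkI k n ρ x ⊤ T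
        = (-1 : ℝ) ^ (m - S.card) * (-1 : ℝ) ^ (n - T.card) *
          ∑ A ∈ (Finset.Icc 1 m).powerset.filter (fun A => Finset.Icc 1 m \ S ⊆ A),
            ∑ B ∈ (Finset.Icc 1 n).powerset.filter (fun B => Finset.Icc 1 n \ T ⊆ B),
              ((-(1/(2*k))) ^ A.card * (-(1/(2*k))) ^ B.card) *
                (flagNum ρ (insert (m + 1) (A ∪ B.image fun b => b + (m + 1))) : ℝ) := by
    have step1 : ∀ x ∈ Finset.univ.filter (fun x : P => ρ x = m + 1),
        LkI k m ρ ⊥ x S * LkI k n ρ x ⊤ T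
          = (-1 : ℝ) ^ (m - S.card) * (-1 : ℝ) ^ (n - T.card) *
            ∑ A ∈ (Finset.Icc 1 m).powerset.filter (fun A => Finset.Icc 1 m \ S ⊆ A),
              ∑ B ∈ (Finset.Icc 1 n).powerset.filter (fun B => Finset.Icc 1 n \ T ⊆ B),
                ((-(1/(2*k))) ^ A.card * (flagNumI ρ ⊥ x A : ℝ)) *
                  ((-(1/(2*k))) ^ B.card * (flagNumI ρ x ⊤ B : ℝ)) := by
      intro x _
      rw [LkI, LkI, mul_mul_mul_comm, Finset.sum_mul_sum]
    rw [Finset.sum_congr rfl step1, ← Finset.mul_sum, Finset.sum_comm]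
    congr 1
    refine Finset.sum_congr rfl fun A hA' => ?_
    rw [Finset.sum_comm]
    refine Finset.sum_congr rfl fun B hB' => ?_
    have : ∑ x ∈ Finset.univ.filter (fun x : P => ρ x = m + 1),
        ((-(1/(2*k))) ^ A.card * (flagNumI ρ ⊥ x A : ℝ)) *
          ((-(1/(2*k))) ^ B.card * (flagNumI ρ x ⊤ B : ℝ))
        = ((-(1/(2*k))) ^ A.card * (-(1/(2*k))) ^ B.card) *
          ∑ x ∈ Finset.univ.filter (fun x : P => ρ x = m + 1),
            (flagNumI ρ ⊥ x A : ℝ) * (flagNumI ρ x ⊤ B : ℝ) := by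
      rw [Finset.mul_sum]
      exact Finset.sum_congr rfl fun x _ => by ring
    rw [this, key A hA' B hB']
  have rhs_eq :
      ∑ A ∈ (Finset.Icc 1 m).powerset.filter (fun A => Finset.Icc 1 m \ S ⊆ A),
        ∑ B ∈ (Finset.Icc 1 n).powerset.filter (fun B => Finset.Icc 1 n \ T ⊆ B),
          (-(1/(2*k))) * (((-(1/(2*k))) ^ A.card * (-(1/(2*k))) ^ B.card) *
            (flagNum ρ (insert (m + 1) (A ∪ B.image fun b => b + (m + 1))) : ℝ))
      = ∑ U ∈ (Finset.Icc 1 (m + n + 1)).powerset.filter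
          (fun U => Finset.Icc 1 (m + n + 1) \ (S ∪ T.image (fun t => t + (m + 1))) ⊆ U),
          (-(1/(2*k))) ^ U.card * (flagNum ρ U : ℝ) := by
    rw [← Finset.sum_product']
    refine Finset.sum_nbij'
      (fun p => insert (m + 1) (p.1 ∪ p.2.image fun b => b + (m + 1)))
      (fun U => (U.filter (fun u => u ≤ m), (U.filter fun u => m + 2 ≤ u).image fun u => u - (m + 1)))
      ?_ ?_ ?_ ?_ ?_
    · -- maps into 𝒰
      rintro ⟨A, B⟩ hp
      rw [Finset.mem_product] at hp
      obtain ⟨hA', hB'⟩ := hp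
      simp only [Finset.mem_filter, Finset.mem_powerset] at hA' hB' ⊢
      obtain ⟨hA1, hA2⟩ := hA'
      obtain ⟨hB1, hB2⟩ := hB'
      constructor
      · intro u hu
        rcases Finset.mem_insert.mp hu with rfl | hu
        · rw [Finset.mem_Icc]; omega
        · rcases Finset.mem_union.mp hu with hu | hu
          · have := Finset.mem_Icc.mp (hA1 hu); rw [Finset.mem_Icc]; omega
          · obtain ⟨b, hb, rfl⟩ := Finset.mem_image.mp hu
            have := Finset.mem_Icc.mp (hB1 hb); rw [Finset.mem_Icc]; omega
      · intro u hu
        rw [Finset.mem_sdiff, Finset.mem_Icc] at hu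
        obtain ⟨⟨hu1, hu2⟩, hu3⟩ := hu
        by_cases h1 : u ≤ m
        · apply Finset.mem_insert_of_mem
          apply Finset.mem_union_left
          apply hA2
          rw [Finset.mem_sdiff, Finset.mem_Icc]
          exact ⟨⟨hu1, h1⟩, fun hus => hu3 (Finset.mem_union_left _ hus)⟩
        · by_cases h2 : u = m + 1
          · exact h2 ▸ Finset.mem_insert_self _ _
          · apply Finset.mem_insert_of_mem
            apply Finset.mem_union_right
            refine Finset.mem_image.mpr ⟨u - (m + 1), ?_, by omega⟩
            apply hB2
            rw [Finset.mem_sdiff, Finset.mem_Icc]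
            refine ⟨⟨by omega, by omega⟩, fun hut => hu3 (Finset.mem_union_right _ ?_)⟩
            exact Finset.mem_image.mpr ⟨u - (m + 1), hut, by omega⟩
    · -- j maps into 𝒜 ×ˢ ℬ
      intro U hU
      simp only [Finset.mem_filter, Finset.mem_powerset] at hU
      obtain ⟨hU1, hU2⟩ := hU
      rw [Finset.mem_product]
      constructor
      · simp only [Finset.mem_filter, Finset.mem_powerset]
        constructor
        · intro u hu
          rw [Finset.mem_filter] at hu
          have := Finset.mem_Icc.mp (hU1 hu.1)
          rw [Finset.mem_Icc]; omega
        · intro a ha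
          rw [Finset.mem_sdiff, Finset.mem_Icc] at ha
          obtain ⟨⟨ha1, ha2⟩, ha3⟩ := ha
          rw [Finset.mem_filter]
          refine ⟨hU2 ?_, ha2⟩
          rw [Finset.mem_sdiff, Finset.mem_Icc]
          refine ⟨⟨ha1, by omega⟩, fun hmem => ?_⟩
          rcases Finset.mem_union.mp hmem with h | h
          · exact ha3 h
          · obtain ⟨t, ht, hte⟩ := Finset.mem_image.mp h
            have := hTb t ht; omega
      · simp only [Finset.mem_filter, Finset.mem_powerset]
        constructor
        · intro b hb
          obtain ⟨u, hu, rfl⟩ := Finset.mem_image.mp hb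
          rw [Finset.mem_filter] at hu
          have := Finset.mem_Icc.mp (hU1 hu.1)
          have := hu.2
          rw [Finset.mem_Icc]; omega
        · intro b hb
          rw [Finset.mem_sdiff, Finset.mem_Icc] at hb
          obtain ⟨⟨hb1, hb2⟩, hb3⟩ := hb
          refine Finset.mem_image.mpr ⟨b + (m + 1), ?_, by omega⟩
          rw [Finset.mem_filter]
          refine ⟨hU2 ?_, by omega⟩
          rw [Finset.mem_sdiff, Finset.mem_Icc]
          refine ⟨⟨by omega, by omega⟩, fun hmem => ?_⟩
          rcases Finset.mem_union.mp hmem with h | h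
          · have := hSb _ h; omega
          · obtain ⟨t, ht, hte⟩ := Finset.mem_image.mp h
            have : t = b := by omega
            exact hb3 (this ▸ ht)
    · -- left inverse
      rintro ⟨A, B⟩ hp
      rw [Finset.mem_product] at hp
      obtain ⟨hA', hB'⟩ := hp
      simp only [Finset.mem_filter, Finset.mem_powerset] at hA' hB'
      have hAb : ∀ a ∈ A, 1 ≤ a ∧ a ≤ m := fun a ha => Finset.mem_Icc.mp (hA'.1 ha)
      have hBb : ∀ b ∈ B, 1 ≤ b ∧ b ≤ n := fun b hb => Finset.mem_Icc.mp (hB'.1 hb)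
      refine Prod.ext ?_ ?_
      · ext a
        simp only [Finset.mem_filter, Finset.mem_insert, Finset.mem_union, Finset.mem_image]
        constructor
        · rintro ⟨rfl | hA | ⟨b, hb, rfl⟩, hle⟩
          · omega
          · exact hA
          · have := hBb b hb; omega
        · intro ha
          exact ⟨Or.inr (Or.inl ha), (hAb a ha).2⟩
      · ext b
        simp only [Finset.mem_image, Finset.mem_filter, Finset.mem_insert, Finset.mem_union]
        constructor
        · rintro ⟨u, ⟨rfl | hu | ⟨b', hb', rfl⟩, hge⟩, rfl⟩
          · omega
          · have := hAb u hu; omega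
          · have : b' + (m + 1) - (m + 1) = b' := by omega
            rw [this]; exact hb'
        · intro hb
          have hb1 := hBb b hb
          exact ⟨b + (m + 1), ⟨Or.inr (Or.inr ⟨b, hb, rfl⟩), by omega⟩, by omega⟩
    · -- right inverse
      intro U hU
      simp only [Finset.mem_filter, Finset.mem_powerset] at hU
      obtain ⟨hU1, hU2⟩ := hU
      have hUb : ∀ u ∈ U, 1 ≤ u ∧ u ≤ m + n + 1 := fun u hu => Finset.mem_Icc.mp (hU1 hu)
      have hm1 : m + 1 ∈ U := by
        apply hU2
        rw [Finset.mem_sdiff, Finset.mem_Icc]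
        refine ⟨⟨by omega, by omega⟩, fun hmem => ?_⟩
        rcases Finset.mem_union.mp hmem with h | h
        · have := hSb _ h; omega
        · obtain ⟨t, ht, hte⟩ := Finset.mem_image.mp h
          have := hTb t ht; omega
      ext u
      simp only [Finset.mem_insert, Finset.mem_union, Finset.mem_filter, Finset.mem_image]
      constructor
      · rintro (rfl | ⟨hu, _⟩ | ⟨a, ⟨u', ⟨hu', hge⟩, rfl⟩, rfl⟩)
        · exact hm1
        · exact hu
        · have : u' - (m + 1) + (m + 1) = u' := by omega
          rw [this]; exact hu'
      · intro hu
        by_cases h1 : u ≤ m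
        · exact Or.inr (Or.inl ⟨hu, h1⟩)
        · by_cases h2 : u = m + 1
          · exact Or.inl h2
          · exact Or.inr (Or.inr ⟨u - (m + 1), ⟨u, ⟨hu, by omega⟩, rfl⟩, by omega⟩)
    · -- values agree
      rintro ⟨A, B⟩ hp
      rw [Finset.mem_product] at hp
      obtain ⟨hA', hB'⟩ := hp
      simp only [Finset.mem_filter, Finset.mem_powerset] at hA' hB'
      show (-(1/(2*k))) * (((-(1/(2*k))) ^ A.card * (-(1/(2*k))) ^ B.card) *
          (flagNum ρ (insert (m + 1) (A ∪ B.image fun b => b + (m + 1))) : ℝ))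
        = (-(1/(2*k))) ^ (insert (m + 1) (A ∪ B.image fun b => b + (m + 1))).card *
          (flagNum ρ (insert (m + 1) (A ∪ B.image fun b => b + (m + 1))) : ℝ)
      rw [eU_card m n hA'.1 hB'.1]
      ring
  rw [lhs_eq, Lk, ← rhs_eq]
  have pull : ∑ A ∈ (Finset.Icc 1 m).powerset.filter (fun A => Finset.Icc 1 m \ S ⊆ A),
      ∑ B ∈ (Finset.Icc 1 n).powerset.filter (fun B => Finset.Icc 1 n \ T ⊆ B),
        (-(1/(2*k))) * (((-(1/(2*k))) ^ A.card * (-(1/(2*k))) ^ B.card) *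
          (flagNum ρ (insert (m + 1) (A ∪ B.image fun b => b + (m + 1))) : ℝ))
      = (-(1/(2*k))) * ∑ A ∈ (Finset.Icc 1 m).powerset.filter (fun A => Finset.Icc 1 m \ S ⊆ A),
          ∑ B ∈ (Finset.Icc 1 n).powerset.filter (fun B => Finset.Icc 1 n \ T ⊆ B),
            ((-(1/(2*k))) ^ A.card * (-(1/(2*k))) ^ B.card) *
              (flagNum ρ (insert (m + 1) (A ∪ B.image fun b => b + (m + 1))) : ℝ) := by
    rw [Finset.mul_sum]
    exact Finset.sum_congr rfl fun A _ => (Finset.mul_sum _ _ _).symm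
  rw [pull]
  have hexp : m + n + 1 - (S ∪ T.image fun t => t + (m + 1)).card
      = (m - S.card) + (n - T.card) + 1 := by
    rw [hSTcard]; omega
  rw [hexp]
  have h2k : (2 : ℝ) * k ≠ 0 := by positivity
  field_simp
  ring
end

section
/- A graded poset P is k-Eulerian if and only if for every interval [x,y] ⊆ P of positive even rank, L^{k,ρ(x,y)}_{[1,ρ(x,y)−1]}([x,y]) = 0. -/
open scoped Classical

attribute [local instance] Fintype.ofFinite

section Aux
open Finset

variable {P : Type} [PartialOrder P] [Fintype P]

/-- open interval as a finset -/
noncomputable def oI (x y : P) : Finset P := univ.filter fun z => x < z ∧ z < y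

noncomputable def chainsIn (x y : P) : Finset (Finset P) :=
  univ.filter fun c => IsChain (· ≤ ·) (c : Set P) ∧ ∀ z ∈ c, x < z ∧ z < y

noncomputable def csum (t : ℝ) (x y : P) : ℝ := ∑ c ∈ chainsIn x y, t ^ c.card

lemma mem_oI {x y z : P} : z ∈ oI x y ↔ x < z ∧ z < y := by simp [oI]

lemma mem_chainsIn {x y : P} {c : Finset P} :
    c ∈ chainsIn x y ↔ IsChain (· ≤ ·) (c : Set P) ∧ ∀ z ∈ c, x < z ∧ z < y := by
  simp [chainsIn]

lemma empty_mem_chainsIn (x y : P) : (∅ : Finset P) ∈ chainsIn x y := by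
  simp [chainsIn]

lemma csum_max (t : ℝ) (x y : P) :
    csum t x y = 1 + t * ∑ z ∈ oI x y, csum t x z := by
  have h0 : (∅ : Finset P) ∈ chainsIn x y := empty_mem_chainsIn x y
  rw [csum, ← Finset.add_sum_erase _ _ h0, Finset.card_empty, pow_zero]
  congr 1
  have hs : ∀ z ∈ oI x y, t * csum t x z = ∑ c ∈ chainsIn x z, t ^ (c.card + 1) := by
    intro z _
    rw [csum, Finset.mul_sum]
    exact Finset.sum_congr rfl fun c _ => by ring
  rw [Finset.mul_sum, Finset.sum_congr rfl hs, Finset.sum_sigma']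
  refine (Finset.sum_bij (fun p _ => insert p.1 p.2) ?_ ?_ ?_ ?_).symm
  · rintro ⟨z, c⟩ hp
    rw [Finset.mem_sigma] at hp
    obtain ⟨hz, hc⟩ := hp
    rw [mem_oI] at hz
    rw [mem_chainsIn] at hc
    rw [Finset.mem_erase]
    constructor
    · exact Finset.insert_ne_empty _ _
    · rw [mem_chainsIn]
      constructor
      · rw [Finset.coe_insert]
        exact hc.1.insert fun b hb _ => Or.inr (hc.2 b hb).2.le
      · intro w hw
        rcases Finset.mem_insert.mp hw with rfl | hw
        · exact hz
        · exact ⟨(hc.2 w hw).1, (hc.2 w hw).2.trans hz.2⟩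
  · rintro ⟨z₁, c₁⟩ h₁ ⟨z₂, c₂⟩ h₂ heq
    rw [Finset.mem_sigma, mem_oI, mem_chainsIn] at h₁ h₂
    replace heq : insert z₁ c₁ = insert z₂ c₂ := heq
    have hlt₁ : ∀ w ∈ c₁, w < z₁ := fun w hw => (h₁.2.2 w hw).2
    have hlt₂ : ∀ w ∈ c₂, w < z₂ := fun w hw => (h₂.2.2 w hw).2
    have hz : z₁ = z₂ := by
      have m1 : z₁ ∈ insert z₂ c₂ := heq ▸ Finset.mem_insert_self z₁ c₁
      have m2 : z₂ ∈ insert z₁ c₁ := heq ▸ Finset.mem_insert_self z₂ c₂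
      rcases Finset.mem_insert.mp m1 with h | h
      · exact h
      · rcases Finset.mem_insert.mp m2 with h' | h'
        · exact h'.symm
        · exact absurd ((hlt₂ _ h).trans (hlt₁ _ h')) (lt_irrefl _)
    subst hz
    have hc : c₁ = c₂ := by
      have e1 : (insert z₁ c₁).erase z₁ = c₁ :=
        Finset.erase_insert (fun h => absurd (hlt₁ _ h) (lt_irrefl _))
      have e2 : (insert z₁ c₂).erase z₁ = c₂ :=
        Finset.erase_insert (fun h => absurd (hlt₂ _ h) (lt_irrefl _))
      rw [← e1, ← e2, heq]
    rw [hc]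
  · intro c hc
    rw [Finset.mem_erase, mem_chainsIn] at hc
    have hne : c.Nonempty := Finset.nonempty_iff_ne_empty.mpr hc.1
    obtain ⟨z, hz, hzmax⟩ := c.exists_maximal hne
    have hlt : ∀ w ∈ c, w ≠ z → w < z := by
      intro w hw hwz
      rcases hc.2.1 hw hz hwz with h | h
      · exact lt_of_le_of_ne h hwz
      · exact absurd (lt_of_le_of_ne h (Ne.symm hwz)) (fun hl => lt_irrefl _ (hl.trans_le (hzmax hw hl.le)))
    refine ⟨⟨z, c.erase z⟩, ?_, ?_⟩
    · rw [Finset.mem_sigma, mem_oI, mem_chainsIn]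
      refine ⟨hc.2.2 z hz, ?_, ?_⟩
      · exact hc.2.1.mono (by simp [Finset.erase_subset])
      · intro w hw
        rw [Finset.mem_erase] at hw
        exact ⟨(hc.2.2 w hw.2).1, hlt w hw.2 hw.1⟩
    · exact Finset.insert_erase hz
  · rintro ⟨z, c⟩ hp
    rw [Finset.mem_sigma, mem_oI, mem_chainsIn] at hp
    have : z ∉ c := fun h => absurd (hp.2.2 z h).2 (lt_irrefl _)
    rw [Finset.card_insert_of_notMem this]


lemma csum_min (t : ℝ) (x y : P) :
    csum t x y = 1 + t * ∑ z ∈ oI x y, csum t z y := by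
  have h0 : (∅ : Finset P) ∈ chainsIn x y := empty_mem_chainsIn x y
  rw [csum, ← Finset.add_sum_erase _ _ h0, Finset.card_empty, pow_zero]
  congr 1
  have hs : ∀ z ∈ oI x y, t * csum t z y = ∑ c ∈ chainsIn z y, t ^ (c.card + 1) := by
    intro z _
    rw [csum, Finset.mul_sum]
    exact Finset.sum_congr rfl fun c _ => by ring
  rw [Finset.mul_sum, Finset.sum_congr rfl hs, Finset.sum_sigma']
  refine (Finset.sum_bij (fun p _ => insert p.1 p.2) ?_ ?_ ?_ ?_).symm
  · rintro ⟨z, c⟩ hp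
    rw [Finset.mem_sigma] at hp
    obtain ⟨hz, hc⟩ := hp
    rw [mem_oI] at hz
    rw [mem_chainsIn] at hc
    rw [Finset.mem_erase]
    constructor
    · exact Finset.insert_ne_empty _ _
    · rw [mem_chainsIn]
      constructor
      · rw [Finset.coe_insert]
        exact hc.1.insert fun b hb _ => Or.inl (hc.2 b hb).1.le
      · intro w hw
        rcases Finset.mem_insert.mp hw with rfl | hw
        · exact hz
        · exact ⟨hz.1.trans (hc.2 w hw).1, (hc.2 w hw).2⟩
  · rintro ⟨z₁, c₁⟩ h₁ ⟨z₂, c₂⟩ h₂ heq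
    rw [Finset.mem_sigma, mem_oI, mem_chainsIn] at h₁ h₂
    replace heq : insert z₁ c₁ = insert z₂ c₂ := heq
    have hlt₁ : ∀ w ∈ c₁, z₁ < w := fun w hw => (h₁.2.2 w hw).1
    have hlt₂ : ∀ w ∈ c₂, z₂ < w := fun w hw => (h₂.2.2 w hw).1
    have hz : z₁ = z₂ := by
      have m1 : z₁ ∈ insert z₂ c₂ := heq ▸ Finset.mem_insert_self z₁ c₁
      have m2 : z₂ ∈ insert z₁ c₁ := heq ▸ Finset.mem_insert_self z₂ c₂
      rcases Finset.mem_insert.mp m1 with h | h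
      · exact h
      · rcases Finset.mem_insert.mp m2 with h' | h'
        · exact h'.symm
        · exact absurd ((hlt₁ _ h').trans (hlt₂ _ h)) (lt_irrefl _)
    subst hz
    have hc : c₁ = c₂ := by
      have e1 : (insert z₁ c₁).erase z₁ = c₁ :=
        Finset.erase_insert (fun h => absurd (hlt₁ _ h) (lt_irrefl _))
      have e2 : (insert z₁ c₂).erase z₁ = c₂ :=
        Finset.erase_insert (fun h => absurd (hlt₂ _ h) (lt_irrefl _))
      rw [← e1, ← e2, heq]
    rw [hc]
  · intro c hc
    rw [Finset.mem_erase, mem_chainsIn] at hc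
    have hne : c.Nonempty := Finset.nonempty_iff_ne_empty.mpr hc.1
    obtain ⟨z, hz, hzmin⟩ := c.exists_minimal hne
    have hlt : ∀ w ∈ c, w ≠ z → z < w := by
      intro w hw hwz
      rcases hc.2.1 hw hz hwz with h | h
      · exact absurd (lt_of_le_of_ne h hwz) (fun hl => lt_irrefl _ (hl.trans_le (hzmin hw hl.le)))
      · exact lt_of_le_of_ne h (Ne.symm hwz)
    refine ⟨⟨z, c.erase z⟩, ?_, ?_⟩
    · rw [Finset.mem_sigma, mem_oI, mem_chainsIn]
      refine ⟨hc.2.2 z hz, ?_, ?_⟩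
      · exact hc.2.1.mono (by simp [Finset.erase_subset])
      · intro w hw
        rw [Finset.mem_erase] at hw
        exact ⟨hlt w hw.2 hw.1, (hc.2.2 w hw.2).2⟩
    · exact Finset.insert_erase hz
  · rintro ⟨z, c⟩ hp
    rw [Finset.mem_sigma, mem_oI, mem_chainsIn] at hp
    have : z ∉ c := fun h => absurd (hp.2.2 z h).1 (lt_irrefl _)
    rw [Finset.card_insert_of_notMem this]

end Aux

section Aux2
open Finset

variable {P : Type} [PartialOrder P] [Fintype P]

lemma muk_def (k : ℝ) (x y : P) (hxy : x ≠ y) :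
    muk k x y = -1 - (1/k) * ∑ z ∈ oI x y, muk k x z := by
  rw [muk, if_neg hxy]
  congr 1
  rw [mul_eq_mul_left_iff]
  left
  exact Finset.sum_attach _ (fun z => muk k x z)

lemma muk_eq_neg_csum (k : ℝ) (hk : k ≠ 0) (x y : P) (hxy : x ≠ y) :
    muk k x y = - csum (-(1/k)) x y := by
  suffices h : ∀ n : ℕ, ∀ y x : P, (univ.filter (· < y)).card ≤ n → x ≠ y →
      muk k x y = - csum (-(1/k)) x y from h _ y x le_rfl hxy
  intro n
  induction n using Nat.strong_induction_on with
  | _ n IH =>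
    intro y x _hcard hxy
    rw [muk_def k x y hxy, csum_max]
    have hz : ∀ z ∈ oI x y, muk k x z = - csum (-(1/k)) x z := by
      intro z hz
      rw [mem_oI] at hz
      have hsub : (univ.filter (· < z)) ⊂ (univ.filter (· < y)) := by
        rw [Finset.ssubset_iff_of_subset]
        · exact ⟨z, by simp [hz.2], by simp⟩
        · intro w hw
          simp only [Finset.mem_filter, Finset.mem_univ, true_and] at hw ⊢
          exact hw.trans hz.2
      exact IH _ (lt_of_lt_of_le (Finset.card_lt_card hsub) _hcard) z x le_rfl hz.1.ne
    rw [Finset.sum_congr rfl hz]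
    rw [Finset.sum_neg_distrib]
    ring

lemma muk_right (k : ℝ) (hk : k ≠ 0) (x y : P) (hxy : x ≠ y) :
    muk k x y = -1 - (1/k) * ∑ z ∈ oI x y, muk k z y := by
  rw [muk_eq_neg_csum k hk x y hxy, csum_min]
  have hz : ∀ z ∈ oI x y, muk k z y = - csum (-(1/k)) z y := by
    intro z hz
    rw [mem_oI] at hz
    exact muk_eq_neg_csum k hk z y hz.2.ne
  rw [Finset.sum_congr rfl hz, Finset.sum_neg_distrib]
  ring

end Aux2


section Aux3
open Finset

variable {P : Type} [PartialOrder P] [Fintype P]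

lemma rank_lt (ρ : P → ℕ) (hcov : ∀ x y : P, x ⋖ y → ρ y = ρ x + 1) :
    ∀ x y : P, x < y → ρ x < ρ y := by
  suffices h : ∀ n : ℕ, ∀ y x : P, (univ.filter (· < y)).card ≤ n → x < y → ρ x < ρ y from
    fun x y hxy => h _ y x le_rfl hxy
  intro n
  induction n using Nat.strong_induction_on with
  | _ n IH =>
    intro y x hcard hxy
    obtain ⟨z, hzmem, hzmax⟩ :=
      (univ.filter fun z => x ≤ z ∧ z < y).exists_maximal ⟨x, by simp [hxy, le_refl]⟩
    simp only [Finset.mem_filter, Finset.mem_univ, true_and] at hzmem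
    have hcy : z ⋖ y := by
      refine ⟨hzmem.2, fun w hzw hwy => lt_irrefl _ (hzw.trans_le (hzmax ?_ hzw.le))⟩
      simp only [Finset.mem_filter, Finset.mem_univ, true_and]
      exact ⟨hzmem.1.trans hzw.le, hwy⟩
    have hry : ρ y = ρ z + 1 := hcov _ _ hcy
    rcases eq_or_lt_of_le hzmem.1 with rfl | hxz
    · omega
    · have hsub : (univ.filter (· < z)) ⊂ (univ.filter (· < y)) := by
        rw [Finset.ssubset_iff_of_subset]
        · exact ⟨z, by simp [hzmem.2], by simp⟩
        · intro w hw
          simp only [Finset.mem_filter, Finset.mem_univ, true_and] at hw ⊢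
          exact hw.trans hzmem.2
      have := IH _ (lt_of_lt_of_le (Finset.card_lt_card hsub) hcard) z x le_rfl hxz
      omega

noncomputable def eps (ρ : P → ℕ) (z : P) : ℝ := (-1 : ℝ) ^ (ρ z)

lemma eps_mul_self (ρ : P → ℕ) (z : P) : eps ρ z * eps ρ z = 1 := by
  rw [eps, ← pow_add]
  exact Even.neg_one_pow ⟨ρ z, rfl⟩

lemma eps_pm (ρ : P → ℕ) (z : P) : eps ρ z = 1 ∨ eps ρ z = -1 := by
  rcases Nat.even_or_odd (ρ z) with h | h
  · exact Or.inl (h.neg_one_pow)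
  · exact Or.inr (h.neg_one_pow)

lemma eps_cases (ρ : P → ℕ) (a b : P) : eps ρ a = eps ρ b ∨ eps ρ a = -eps ρ b := by
  rcases eps_pm ρ a with h | h <;> rcases eps_pm ρ b with h' | h' <;>
    simp [h, h']

lemma neg_one_pow_sub (ρ : P → ℕ) {a b : P} (hab : ρ a ≤ ρ b) :
    (-1 : ℝ) ^ (ρ b - ρ a) = eps ρ a * eps ρ b := by
  obtain ⟨d, hd⟩ : ∃ d, ρ b = ρ a + d := ⟨ρ b - ρ a, by omega⟩
  rw [eps, eps, hd, pow_add, ← mul_assoc, ← pow_add]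
  rw [Even.neg_one_pow ⟨ρ a, rfl⟩, one_mul]
  congr 1
  omega

lemma eps_eq_iff (ρ : P → ℕ) {a b : P} (hab : ρ a ≤ ρ b) :
    eps ρ a = eps ρ b ↔ Even (ρ b - ρ a) := by
  have h1 := neg_one_pow_sub ρ hab
  constructor
  · intro heq
    rw [← neg_one_pow_eq_one_iff_even (R := ℝ) (by norm_num)]
    rw [h1, heq]
    exact eps_mul_self ρ b
  · intro hev
    have h : eps ρ a * eps ρ b = 1 := by rw [← h1]; exact hev.neg_one_pow
    calc eps ρ a = eps ρ a * (eps ρ b * eps ρ b) := by rw [eps_mul_self]; ring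
      _ = (eps ρ a * eps ρ b) * eps ρ b := by ring
      _ = eps ρ b := by rw [h, one_mul]

/-- From the defining (left) recursion and known values `μ_k = ε·ε` on the interval,
the alternating rank sum over the open interval. -/
lemma sum_eps_eq (k : ℝ) (hk : k ≠ 0) (ρ : P → ℕ) (a b : P) (hab : a < b)
    (hb : muk k a b = eps ρ a * eps ρ b)
    (hz : ∀ z, a < z → z < b → muk k a z = eps ρ a * eps ρ z) :
    ∑ z ∈ oI a b, eps ρ z = -k * (eps ρ a + eps ρ b) := by
  have hrec := muk_def k a b hab.ne
  rw [hb] at hrec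
  have hsum : ∑ z ∈ oI a b, muk k a z = ∑ z ∈ oI a b, (eps ρ a * eps ρ z) := by
    refine Finset.sum_congr rfl fun z hmem => ?_
    rw [mem_oI] at hmem
    exact hz z hmem.1 hmem.2
  rw [hsum, ← Finset.mul_sum] at hrec
  have hsa := eps_mul_self ρ a
  field_simp at hrec
  linear_combination (eps ρ a) * hrec -
    ((∑ z ∈ oI a b, eps ρ z) + k * eps ρ b) * hsa

end Aux3


section Aux4
open Finset

variable {P : Type} [PartialOrder P] [Fintype P]

/-- The core identity. -/
lemma core_identity (k : ℝ) (hk : k ≠ 0) (ρ : P → ℕ) (u v : P) (huv : u < v)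
    (h0 : ∀ z, u < z → z < v → eps ρ z = eps ρ v → muk (2*k) z v = 0)
    (hH : ∀ w, u < w → w < v → ∑ z ∈ oI u w, eps ρ z = -k * (eps ρ u + eps ρ w)) :
    2 * (∑ z ∈ oI u v, eps ρ z)
      = -(2*k) * (eps ρ u + eps ρ v) * (1 + muk (2*k) u v) := by
  have h2k : (2*k : ℝ) ≠ 0 := mul_ne_zero two_ne_zero hk
  set S : P → ℝ := fun a => ∑ z ∈ oI a v, muk (2*k) z v with hS
  set A : ℝ := ∑ z ∈ oI u v, eps ρ z * muk (2*k) z v with hA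
  set E : ℝ := ∑ z ∈ oI u v, eps ρ z with hE
  have hrec : ∀ a : P, a ≠ v → muk (2*k) a v = -1 - (1/(2*k)) * S a :=
    fun a ha => muk_right (2*k) h2k a v ha
  -- Step 1 : A = -eps v * S u
  have step1 : A = -(eps ρ v) * S u := by
    calc A = ∑ z ∈ oI u v, (-(eps ρ v) * muk (2*k) z v) := by
          rw [hA]
          refine Finset.sum_congr rfl fun z hz => ?_
          rw [mem_oI] at hz
          rcases eps_cases ρ z v with h | h
          · rw [h0 z hz.1 hz.2 h]
            ring
          · rw [h]
      _ = -(eps ρ v) * S u := by rw [← Finset.mul_sum]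
  -- Step 2 : the double sum swap
  have hOr : ∀ z ∈ oI u v, oI z v = (oI u v).filter (fun w => z < w) := by
    intro z hz
    rw [mem_oI] at hz
    ext w
    rw [mem_oI, Finset.mem_filter, mem_oI]
    constructor
    · exact fun h => ⟨⟨hz.1.trans h.1, h.2⟩, h.1⟩
    · exact fun h => ⟨h.2, h.1.2⟩
  have hOl : ∀ w ∈ oI u v, oI u w = (oI u v).filter (fun z => z < w) := by
    intro w hw
    rw [mem_oI] at hw
    ext z
    rw [mem_oI, Finset.mem_filter, mem_oI]
    constructor
    · exact fun h => ⟨⟨h.1, h.2.trans hw.2⟩, h.2⟩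
    · exact fun h => ⟨h.1.1, h.2⟩
  have swap : ∑ z ∈ oI u v, eps ρ z * S z
      = ∑ w ∈ oI u v, (∑ z ∈ oI u w, eps ρ z) * muk (2*k) w v := by
    calc ∑ z ∈ oI u v, eps ρ z * S z
        = ∑ z ∈ oI u v, ∑ w ∈ oI u v,
            (if z < w then eps ρ z * muk (2*k) w v else 0) := by
          refine Finset.sum_congr rfl fun z hz => ?_
          rw [hS]
          simp only
          rw [hOr z hz, Finset.mul_sum, Finset.sum_filter]
      _ = ∑ w ∈ oI u v, ∑ z ∈ oI u v,
            (if z < w then eps ρ z * muk (2*k) w v else 0) := Finset.sum_comm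
      _ = ∑ w ∈ oI u v, (∑ z ∈ oI u w, eps ρ z) * muk (2*k) w v := by
          refine Finset.sum_congr rfl fun w hw => ?_
          rw [hOl w hw, Finset.sum_mul, ← Finset.sum_filter]
  have swap2 : ∑ z ∈ oI u v, eps ρ z * S z = -k * eps ρ u * S u - k * A := by
    rw [swap]
    calc ∑ w ∈ oI u v, (∑ z ∈ oI u w, eps ρ z) * muk (2*k) w v
        = ∑ w ∈ oI u v, (-k * (eps ρ u + eps ρ w)) * muk (2*k) w v := by
          refine Finset.sum_congr rfl fun w hw => ?_
          rw [mem_oI] at hw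
          rw [hH w hw.1 hw.2]
      _ = ∑ w ∈ oI u v, ((-k * eps ρ u) * muk (2*k) w v
            + (-k) * (eps ρ w * muk (2*k) w v)) := by
          refine Finset.sum_congr rfl fun w hw => ?_
          ring
      _ = -k * eps ρ u * S u - k * A := by
          rw [Finset.sum_add_distrib, ← Finset.mul_sum, ← Finset.mul_sum, hS, hA]
          ring
  have expandA : A = -E - (1/(2*k)) * (∑ z ∈ oI u v, eps ρ z * S z) := by
    calc A = ∑ z ∈ oI u v, eps ρ z * (-1 - (1/(2*k)) * S z) := by
          rw [hA]
          refine Finset.sum_congr rfl fun z hz => ?_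
          rw [mem_oI] at hz
          rw [hrec z hz.2.ne]
      _ = ∑ z ∈ oI u v, (-(eps ρ z) - (1/(2*k)) * (eps ρ z * S z)) := by
          refine Finset.sum_congr rfl fun z _ => ?_
          ring
      _ = -E - (1/(2*k)) * (∑ z ∈ oI u v, eps ρ z * S z) := by
          rw [Finset.sum_sub_distrib, ← Finset.mul_sum, Finset.sum_neg_distrib, hE]
  have hu : muk (2*k) u v = -1 - (1/(2*k)) * S u := hrec u huv.ne
  rw [hu]
  rw [swap2] at expandA
  field_simp at expandA ⊢
  linear_combination expandA - step1
end Aux4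


section Aux5
open Finset

variable {P : Type} [PartialOrder P] [Fintype P]

lemma muk2_vanish (k : ℝ) (hk : k ≠ 0) (ρ : P → ℕ)
    (hmono : ∀ a b : P, a < b → ρ a < ρ b)
    (hKE : IsKEulerian P ρ k) :
    ∀ d : ℕ, ∀ u v : P, ρ v - ρ u ≤ d → u < v → eps ρ u = eps ρ v →
      muk (2*k) u v = 0 := by
  have hval : ∀ a b : P, a ≤ b → muk k a b = eps ρ a * eps ρ b := by
    intro a b hab
    rw [hKE a b hab, neg_one_pow_sub ρ ?_]
    rcases eq_or_lt_of_le hab with rfl | h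
    · exact le_rfl
    · exact (hmono _ _ h).le
  have hHall : ∀ a b : P, a < b → ∑ z ∈ oI a b, eps ρ z = -k * (eps ρ a + eps ρ b) := by
    intro a b hab
    exact sum_eps_eq k hk ρ a b hab (hval a b hab.le)
      (fun z hz1 _ => hval a z hz1.le)
  intro d
  induction d using Nat.strong_induction_on with
  | _ d IH =>
    intro u v hd huv heq
    have h0 : ∀ z, u < z → z < v → eps ρ z = eps ρ v → muk (2*k) z v = 0 := by
      intro z hz1 hz2 hze
      have h1 := hmono u z hz1
      have h2 := hmono z v hz2
      exact IH (ρ v - ρ z) (by omega) z v le_rfl hz2 hze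
    have hcore := core_identity k hk ρ u v huv h0 (fun w hw1 _ => hHall u w hw1)
    rw [hHall u v huv] at hcore
    have h1 : 2*k*((eps ρ u + eps ρ v) * muk (2*k) u v) = 0 := by
      linear_combination hcore
    have hsne : eps ρ u + eps ρ v ≠ 0 := by
      rw [← heq]
      rcases eps_pm ρ u with h | h <;> rw [h] <;> norm_num
    rcases mul_eq_zero.mp h1 with h | h
    · exact absurd h (mul_ne_zero two_ne_zero hk)
    · rcases mul_eq_zero.mp h with h | h
      · exact absurd h hsne
      · exact h

lemma KE_of_vanish (k : ℝ) (hk : k ≠ 0) (ρ : P → ℕ)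
    (hmono : ∀ a b : P, a < b → ρ a < ρ b)
    (h2 : ∀ u v : P, u < v → eps ρ u = eps ρ v → muk (2*k) u v = 0) :
    ∀ d : ℕ, ∀ u v : P, ρ v - ρ u ≤ d → u ≤ v → muk k u v = eps ρ u * eps ρ v := by
  intro d
  induction d using Nat.strong_induction_on with
  | _ d IH =>
    intro u v hd huv
    rcases eq_or_lt_of_le huv with rfl | hlt
    · rw [muk, if_pos rfl]
      exact (eps_mul_self ρ u).symm
    · have hIHz : ∀ z, u < z → z < v → muk k u z = eps ρ u * eps ρ z := by
        intro z hz1 hz2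
        have h1 := hmono u z hz1
        have h2' := hmono z v hz2
        exact IH (ρ z - ρ u) (by omega) u z le_rfl hz1.le
      have hH : ∀ w, u < w → w < v → ∑ z ∈ oI u w, eps ρ z
          = -k*(eps ρ u + eps ρ w) := by
        intro w hw1 hw2
        exact sum_eps_eq k hk ρ u w hw1 (hIHz w hw1 hw2)
          (fun z hz1 hz2 => hIHz z hz1 (hz2.trans hw2))
      have hcore := core_identity k hk ρ u v hlt
        (fun z _ hz2 hze => h2 z v hz2 hze) hH
      have hSig : ∑ z ∈ oI u v, eps ρ z = -k * (eps ρ u + eps ρ v) := by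
        rcases eps_cases ρ u v with he | he
        · rw [h2 u v hlt he] at hcore
          linear_combination hcore / 2
        · linear_combination hcore / 2 - k * (muk (2*k) u v) * he
      rw [muk_def k u v hlt.ne]
      have hsum : ∑ z ∈ oI u v, muk k u z = ∑ z ∈ oI u v, (eps ρ u * eps ρ z) := by
        refine Finset.sum_congr rfl fun z hz => ?_
        rw [mem_oI] at hz
        exact hIHz z hz.1 hz.2
      rw [hsum, ← Finset.mul_sum, hSig]
      have hsa := eps_mul_self ρ u
      field_simp
      linear_combination hsa

end Aux5


section Aux6
open Finset

variable {P : Type} [PartialOrder P] [Fintype P]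

lemma LkI_eq_csum (k : ℝ) (ρ : P → ℕ)
    (hmono : ∀ a b : P, a < b → ρ a < ρ b) (x y : P) (hxy : x < y) :
    LkI k (ρ y - ρ x - 1) ρ x y (Finset.Icc 1 (ρ y - ρ x - 1))
      = csum (-(1/(2*k))) x y := by
  set n := ρ y - ρ x - 1 with hn
  have hm : ρ x < ρ y := hmono x y hxy
  set r : P → ℕ := fun z => ρ z - ρ x with hr
  have hinj : ∀ c ∈ chainsIn x y, ∀ z ∈ c, ∀ w ∈ c, r z = r w → z = w := by
    intro c hc z hz w hw hrw
    rw [mem_chainsIn] at hc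
    by_contra hne
    have hxz := (hc.2 z hz).1
    have hxw := (hc.2 w hw).1
    rcases hc.1 hz hw hne with h | h
    · have := hmono z w (lt_of_le_of_ne h hne)
      have := hmono x z hxz
      rw [hr] at hrw
      simp only at hrw
      omega
    · have := hmono w z (lt_of_le_of_ne h (Ne.symm hne))
      have := hmono x w hxw
      rw [hr] at hrw
      simp only at hrw
      omega
  have himg : ∀ c ∈ chainsIn x y, c.image r ⊆ Finset.Icc 1 n := by
    intro c hc w hw
    rw [Finset.mem_image] at hw
    obtain ⟨z, hz, rfl⟩ := hw
    rw [mem_chainsIn] at hc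
    have h1 := hmono x z (hc.2 z hz).1
    have h2 := hmono z y (hc.2 z hz).2
    rw [Finset.mem_Icc]
    rw [hn]
    simp only [hr]
    omega
  have hcard : ∀ c ∈ chainsIn x y, (c.image r).card = c.card := by
    intro c hc
    exact Finset.card_image_of_injOn fun z hz w hw h => hinj c hc z hz w hw h
  have hflag : ∀ T : Finset ℕ, (flagNumI ρ x y T : ℝ)
      = ((chainsIn x y).filter (fun c => c.image r = T)).card := by
    intro T
    rw [flagNumI]
    norm_cast
    congr 1
    ext c
    simp only [Finset.mem_filter, Finset.mem_univ, true_and, mem_chainsIn, ← hr]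
    constructor
    · rintro ⟨h1, h2, h3, _⟩
      exact ⟨⟨h1, h2⟩, h3⟩
    · rintro ⟨⟨h1, h2⟩, h3⟩
      refine ⟨h1, h2, h3, ?_⟩
      rw [← h3]
      exact (hcard c (mem_chainsIn.mpr ⟨h1, h2⟩)).symm
  rw [LkI]
  have hcardIcc : (Finset.Icc 1 n).card = n := by
    rw [Nat.card_Icc]
    omega
  rw [hcardIcc, Nat.sub_self, pow_zero, one_mul, Finset.sdiff_self]
  rw [Finset.filter_true_of_mem (fun T _ => Finset.empty_subset T)]
  rw [csum]
  rw [← Finset.sum_fiberwise_of_maps_to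
    (fun c hc => Finset.mem_powerset.mpr (himg c hc))
    (fun c => (-(1/(2*k))) ^ c.card)]
  refine Finset.sum_congr rfl fun T hT => ?_
  rw [hflag T, Finset.card_eq_sum_ones ((chainsIn x y).filter _)]
  push_cast
  rw [Finset.mul_sum]
  refine Finset.sum_congr rfl fun c hc => ?_
  rw [Finset.mem_filter] at hc
  rw [mul_one, ← hc.2, hcard c hc.1]

end Aux6

/-- `P` is `k`-Eulerian iff `L^{k,ρ(x,y)}_{[1,ρ(x,y)-1]}([x,y]) = 0` for
every interval of positive even rank. -/
theorem isKEulerian_iff_Lk_intervals {P : Type} [PartialOrder P] [BoundedOrder P] [Finite P]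
    (n : ℕ) (ρ : P → ℕ) (hP : IsGraded P ρ n) (k : ℝ) (hk : 0 < k) :
    IsKEulerian P ρ k ↔
      ∀ x y : P, x ≤ y → 0 < ρ y - ρ x → Even (ρ y - ρ x) →
        LkI k (ρ y - ρ x - 1) ρ x y (Finset.Icc 1 (ρ y - ρ x - 1)) = 0 := by
  obtain ⟨hbot, htop, hcov⟩ := hP
  have hmono : ∀ a b : P, a < b → ρ a < ρ b := rank_lt ρ hcov
  have hk' : k ≠ 0 := ne_of_gt hk
  have h2k : (2*k : ℝ) ≠ 0 := mul_ne_zero two_ne_zero hk'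
  have hmle : ∀ a b : P, a ≤ b → ρ a ≤ ρ b := by
    intro a b hab
    rcases eq_or_lt_of_le hab with rfl | hl
    · exact le_rfl
    · exact (hmono a b hl).le
  constructor
  · intro hKE x y hxy hpos heven
    have hlt : x < y := by
      rcases eq_or_lt_of_le hxy with rfl | h
      · simp at hpos
      · exact h
    rw [LkI_eq_csum k ρ hmono x y hlt]
    have h1 : muk (2*k) x y = - csum (-(1/(2*k))) x y :=
      muk_eq_neg_csum (2*k) h2k x y hlt.ne
    have h2 : muk (2*k) x y = 0 := by
      refine muk2_vanish k hk' ρ hmono hKE (ρ y - ρ x) x y le_rfl hlt ?_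
      exact (eps_eq_iff ρ (hmono x y hlt).le).mpr heven
    rw [h2] at h1
    linarith
  · intro h x y hxy
    have hvan : ∀ u v : P, u < v → eps ρ u = eps ρ v → muk (2*k) u v = 0 := by
      intro u v huv he
      have hm := hmono u v huv
      have heven : Even (ρ v - ρ u) := (eps_eq_iff ρ hm.le).mp he
      have hL := h u v huv.le (by omega) heven
      rw [LkI_eq_csum k ρ hmono u v huv] at hL
      rw [muk_eq_neg_csum (2*k) h2k u v huv.ne, hL, neg_zero]
    have hval := KE_of_vanish k hk' ρ hmono hvan (ρ y - ρ x) x y le_rfl hxy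
    rw [hval]
    exact (neg_one_pow_sub ρ (hmle x y hxy)).symm
end

section
/- A graded poset P is k-Eulerian if and only if μ_{2k}([x,y]) = 0 for every interval [x,y] ⊆ P of positive even rank. -/
open scoped Classical

attribute [local instance] Fintype.ofFinite

/-!
Realise the incidence algebra of `P` by real `P × P` matrices and write `a`, `b`, `m_K` for the
strict parts of `ζ`, of `σ(x, y) = (-1)^(ρ y - ρ x)` and of `μ_K`. The recursion defining `μ_K`
says exactly `(m_K + K)(a + K) = K²`; hence `m_K` is determined by `a`, and `P` is `k`-Eulerian
iff `b (a + k) = -k a`. Conjugation by `D = diag((-1)^ρ)` is an involutive automorphism taking `a`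
to `b`, and `μ_{2k}` vanishes on the intervals of positive even rank iff `m_{2k} + D m_{2k} D = 0`.
With `u = a + 2k` and `v = b + 2k` we have `u⁻¹ = (m_{2k} + 2k) / 4k²` and
`v⁻¹ = (D m_{2k} D + 2k) / 4k²`, and `b (a + k) + k a = v u - k (u + v)` vanishes iff
`k (u⁻¹ + v⁻¹) = 1`, that is, iff `m_{2k} + D m_{2k} D = 0`.
-/

section MatrixAlgebra

variable {n 𝕜 : Type*} [Fintype n] [DecidableEq n] [Field 𝕜] {A B : Matrix n n 𝕜} {c : 𝕜}

theorem Matrix.mul_eq_smul_one_comm (hc : c ≠ 0) : A * B = c • 1 ↔ B * A = c • 1 := by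
  have key : ∀ A B : Matrix n n 𝕜, A * B = c • 1 → B * A = c • 1 := fun A B h => by
    have h1 : (c⁻¹ • A) * B = 1 := by
      rw [smul_mul_assoc, h, smul_smul, inv_mul_cancel₀ hc, one_smul]
    rw [mul_eq_one_comm, mul_smul_comm] at h1
    rw [← smul_right_inj (inv_ne_zero hc), h1, smul_smul, inv_mul_cancel₀ hc, one_smul]
  exact ⟨key A B, key B A⟩

theorem Matrix.isUnit_left_of_mul_eq_smul_one (hc : c ≠ 0) (h : A * B = c • 1) : IsUnit A := by
  rw [Matrix.isUnit_iff_isUnit_det]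
  exact Matrix.isUnit_det_of_right_inverse (B := c⁻¹ • B) <| by
    rw [mul_smul_comm, h, smul_smul, inv_mul_cancel₀ hc, one_smul]

theorem Matrix.isUnit_right_of_mul_eq_smul_one (hc : c ≠ 0) (h : A * B = c • 1) : IsUnit B :=
  Matrix.isUnit_left_of_mul_eq_smul_one hc ((Matrix.mul_eq_smul_one_comm hc).mp h)

theorem Matrix.conj_add_smul_one_mul_conj_add_smul_one {D : Matrix n n 𝕜} (hD : D * D = 1)
    {d : 𝕜} (h : (A + c • 1) * (B + c • 1) = d • 1) :
    (D * A * D + c • 1) * (D * B * D + c • 1) = d • 1 := by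
  have hD' : ∀ X : Matrix n n 𝕜, D * (D * X) = X := fun X => by rw [← mul_assoc, hD, one_mul]
  calc (D * A * D + c • 1) * (D * B * D + c • 1) = D * ((A + c • 1) * (B + c • 1)) * D := by
        simp only [mul_add, add_mul, mul_assoc, smul_mul_assoc, mul_smul_comm, one_mul, mul_one,
          hD', hD]
    _ = d • 1 := by rw [h, mul_smul_comm, smul_mul_assoc, mul_one, hD]

variable [CharZero 𝕜] {a b m m' : Matrix n n 𝕜} {k : 𝕜}

theorem mul_add_smul_eq_neg_smul_iff_add_eq_zero (hk : k ≠ 0)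
    (hma : (m + (2 * k) • 1) * (a + (2 * k) • 1) = (2 * k) ^ 2 • 1)
    (hmb : (m' + (2 * k) • 1) * (b + (2 * k) • 1) = (2 * k) ^ 2 • 1) :
    b * (a + k • 1) = -k • a ↔ m + m' = 0 := by
  have hc : (2 * k) ^ 2 ≠ 0 := by simp [hk]
  have ham := (Matrix.mul_eq_smul_one_comm hc).mp hma
  have hbm := (Matrix.mul_eq_smul_one_comm hc).mp hmb
  set u := a + (2 * k) • 1
  set v := b + (2 * k) • 1
  set M := m + (2 * k) • 1
  have key : (b * (a + k • 1) + k • a) * M = -k • (v * (m + m')) := by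
    calc (b * (a + k • 1) + k • a) * M = v * (u * M) - k • (u * M) - k • (v * M) := by
          simp only [u, v, mul_add, add_mul, smul_mul_assoc, mul_smul_comm, mul_one, one_mul,
            smul_add, mul_assoc]
          module
      _ = v * (u * M) - k • (v * (m' + (2 * k) • 1)) - k • (v * M) := by rw [ham, hbm]
      _ = -k • (v * (m + m')) := by
          rw [ham, ← mul_smul_comm, ← mul_smul_comm, ← mul_sub, ← mul_sub, ← mul_smul_comm]
          congr 1
          module
  constructor
  · intro h
    rw [h, neg_smul, neg_add_cancel, zero_mul, eq_comm, smul_eq_zero,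
      or_iff_right (neg_ne_zero.mpr hk)] at key
    exact (Matrix.isUnit_right_of_mul_eq_smul_one hc hmb).mul_right_eq_zero.mp key
  · intro h
    rw [h, mul_zero, smul_zero] at key
    rw [neg_smul, ← add_eq_zero_iff_eq_neg]
    exact (Matrix.isUnit_left_of_mul_eq_smul_one hc hma).mul_left_eq_zero.mp key

end MatrixAlgebra

section SignDiagonal

variable {ι : Type*} [Fintype ι]

noncomputable def signDiagonal (ρ : ι → ℕ) : Matrix ι ι ℝ :=
  Matrix.diagonal fun x => (-1) ^ ρ x

theorem signDiagonal_mul_self (ρ : ι → ℕ) : signDiagonal ρ * signDiagonal ρ = 1 := by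
  rw [signDiagonal, Matrix.diagonal_mul_diagonal, ← Matrix.diagonal_one]
  congr 1
  ext x
  rw [← pow_add, ← two_mul, pow_mul, neg_one_sq, one_pow]

theorem signDiagonal_conj_apply (ρ : ι → ℕ) (A : Matrix ι ι ℝ) {x y : ι} (h : ρ x ≤ ρ y) :
    (signDiagonal ρ * A * signDiagonal ρ) x y = (-1) ^ (ρ y - ρ x) * A x y := by
  rw [signDiagonal, Matrix.mul_diagonal, Matrix.diagonal_mul, mul_comm, ← mul_assoc, ← pow_add,
    show ρ y + ρ x = ρ y - ρ x + 2 * ρ x by omega, pow_add, pow_mul, neg_one_sq, one_pow, mul_one]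

end SignDiagonal

section IncidenceMatrices

variable {P : Type} [PartialOrder P] [Fintype P]

theorem muk_self (K : ℝ) (x : P) : muk K x x = 1 := by
  rw [muk, if_pos rfl]

theorem muk_of_ne (K : ℝ) {x y : P} (h : x ≠ y) :
    muk K x y = -1 - (1 / K) * ∑ z ∈ Finset.univ.filter (fun z => x < z ∧ z < y), muk K x z := by
  rw [muk, if_neg h, Finset.sum_attach]

noncomputable def strictZeta : Matrix P P ℝ :=
  Matrix.of fun x y => if x < y then 1 else 0

noncomputable def strictMuk (K : ℝ) : Matrix P P ℝ :=
  Matrix.of fun x y => if x < y then muk K x y else 0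

noncomputable def strictSign (ρ : P → ℕ) : Matrix P P ℝ :=
  Matrix.of fun x y => if x < y then (-1) ^ (ρ y - ρ x) else 0

theorem strictMuk_mul {K : ℝ} (hK : K ≠ 0) :
    strictMuk K * (strictZeta + K • 1) = -K • (strictZeta : Matrix P P ℝ) := by
  ext x y
  have hsum : ∑ z, strictMuk K x z * strictZeta z y
      = ∑ z ∈ Finset.univ.filter (fun z => x < z ∧ z < y), muk K x z := by
    rw [Finset.sum_filter]
    refine Finset.sum_congr rfl fun z _ => ?_
    simp only [strictMuk, strictZeta, Matrix.of_apply]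
    split_ifs <;> simp_all
  rw [Matrix.mul_add, Matrix.add_apply, Matrix.mul_apply, hsum, Matrix.mul_smul, Matrix.mul_one,
    Matrix.smul_apply, Matrix.smul_apply, smul_eq_mul, smul_eq_mul]
  simp only [strictMuk, strictZeta, Matrix.of_apply]
  split_ifs with hxy
  · rw [muk_of_ne K hxy.ne]
    field_simp
    ring
  · rw [Finset.sum_eq_zero fun z hz => absurd ((Finset.mem_filter.mp hz).2.1.trans
      (Finset.mem_filter.mp hz).2.2) hxy]
    ring

theorem strictMuk_add_smul_one_mul {K : ℝ} (hK : K ≠ 0) :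
    (strictMuk K + K • 1) * (strictZeta + K • 1) = K ^ 2 • (1 : Matrix P P ℝ) := by
  rw [add_mul, strictMuk_mul hK, smul_mul_assoc, one_mul, smul_add, smul_smul]
  module

theorem eq_strictMuk_iff {K : ℝ} (hK : K ≠ 0) {f : Matrix P P ℝ} :
    f = strictMuk K ↔ f * (strictZeta + K • 1) = -K • strictZeta := by
  refine ⟨fun h => h ▸ strictMuk_mul hK, fun h => ?_⟩
  have hunit := Matrix.isUnit_right_of_mul_eq_smul_one (pow_ne_zero 2 hK)
    (strictMuk_add_smul_one_mul (P := P) hK)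
  rw [← sub_eq_zero, ← hunit.mul_left_eq_zero, sub_mul, h, strictMuk_mul hK, sub_self]

theorem isKEulerian_iff_strictSign_eq (ρ : P → ℕ) (k : ℝ) :
    IsKEulerian P ρ k ↔ strictSign ρ = strictMuk k := by
  simp only [IsKEulerian, ← Matrix.ext_iff, strictSign, strictMuk, Matrix.of_apply]
  refine forall₂_congr fun x y => ?_
  rcases eq_or_ne x y with rfl | hne
  · simp [muk_self]
  · by_cases hxy : x ≤ y
    · simp [lt_of_le_of_ne hxy hne, hxy, eq_comm]
    · have hlt : ¬ x < y := fun h => hxy h.le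
      simp [hxy, hlt]

theorem signDiagonal_conj_strictZeta {ρ : P → ℕ} (hρ : Monotone ρ) :
    signDiagonal ρ * strictZeta * signDiagonal ρ = strictSign ρ := by
  ext x y
  by_cases hxy : x < y
  · rw [signDiagonal_conj_apply ρ _ (hρ hxy.le)]
    simp [strictZeta, strictSign, hxy]
  · simp [signDiagonal, strictZeta, strictSign, hxy]

theorem forall_muk_eq_zero_iff {ρ : P → ℕ} (hρ : StrictMono ρ) (K : ℝ) :
    (∀ x y : P, x ≤ y → 0 < ρ y - ρ x → Even (ρ y - ρ x) → muk K x y = 0) ↔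
      strictMuk K + signDiagonal ρ * strictMuk K * signDiagonal ρ = 0 := by
  rw [← Matrix.ext_iff]
  refine forall₂_congr fun x y => ?_
  by_cases hxy : x < y
  · rw [Matrix.add_apply, signDiagonal_conj_apply ρ _ (hρ hxy).le]
    simp only [strictMuk, Matrix.of_apply, if_pos hxy, Matrix.zero_apply]
    rcases Nat.even_or_odd (ρ y - ρ x) with he | ho
    · simp [hxy.le, hρ hxy, he, he.neg_one_pow]
    · simp [ho.neg_one_pow, Nat.not_even_iff_odd.mpr ho]
  · refine iff_of_true (fun hle hpos _ => absurd (lt_of_le_of_ne hle ?_) hxy) ?_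
    · rintro rfl
      omega
    · simp [strictMuk, signDiagonal, hxy]

end IncidenceMatrices

theorem strictMono_of_covBy_imp_eq_add_one {α : Type*} [PartialOrder α] [IsStronglyAtomic α]
    [WellFoundedGT α] {f : α → ℕ} (hf : ∀ a b, a ⋖ b → f b = f a + 1) : StrictMono f := by
  intro a b hab
  induction a using WellFoundedGT.induction with
  | _ a ih =>
    obtain ⟨c, hac, hcb⟩ := exists_covBy_le_of_lt hab
    have hfc := hf a c hac
    rcases hcb.eq_or_lt with rfl | hcb
    · omega
    · have := ih c hac.lt hcb
      omega

/-- `P` is `k`-Eulerian iff `μ_{2k}` vanishes on every interval of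
positive even rank. -/
theorem isKEulerian_iff_muk_two_k {P : Type} [PartialOrder P] [BoundedOrder P] [Finite P]
    (n : ℕ) (ρ : P → ℕ) (hP : IsGraded P ρ n) (k : ℝ) (hk : 0 < k) :
    IsKEulerian P ρ k ↔
      ∀ x y : P, x ≤ y → 0 < ρ y - ρ x → Even (ρ y - ρ x) →
        muk (2 * k) x y = 0 := by
  have hρ : StrictMono ρ := strictMono_of_covBy_imp_eq_add_one hP.2.2
  have hD := signDiagonal_mul_self ρ
  have h2k : 2 * k ≠ 0 := by positivity
  rw [isKEulerian_iff_strictSign_eq, eq_strictMuk_iff hk.ne',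
    ← signDiagonal_conj_strictZeta hρ.monotone,
    mul_add_smul_eq_neg_smul_iff_add_eq_zero hk.ne' (strictMuk_add_smul_one_mul h2k)
      (Matrix.conj_add_smul_one_mul_conj_add_smul_one hD (strictMuk_add_smul_one_mul h2k)),
    forall_muk_eq_zero_iff hρ]
end

section
/- A graded poset P is half-Eulerian if and only if the ordinary Möbius function μ([x,y]) equals zero for every interval [x,y] ⊆ P of positive even rank. -/
open scoped Classical

attribute [local instance] Fintype.ofFinite

section HalfEulerAux

open Finset

variable {P : Type} [PartialOrder P] [Fintype P]

private lemma mobius_self' (x : P) : mobius x x = 1 := by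
  rw [mobius.eq_def]; simp

private lemma mobius_of_lt {x y : P} (h : x < y) :
    mobius x y = -∑ z ∈ univ.filter (fun z => x ≤ z ∧ z < y), mobius x z := by
  rw [mobius.eq_def, if_neg h.ne, Finset.sum_attach]

private lemma muk_of_lt {x y : P} (h : x < y) :
    muk (1/2) x y = -1 - 2 * ∑ z ∈ univ.filter (fun z => x < z ∧ z < y), muk (1/2) x z := by
  rw [muk.eq_def, if_neg h.ne, Finset.sum_attach]
  norm_num

private lemma Icl_self (x : P) : univ.filter (fun z => x ≤ z ∧ z ≤ x) = {x} := by
  ext z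
  simp only [mem_filter, mem_univ, true_and, mem_singleton]
  exact ⟨fun h => le_antisymm h.2 h.1, fun h => by subst h; exact ⟨le_rfl, le_rfl⟩⟩

private lemma Ico_eq_insert {x y : P} (h : x < y) :
    univ.filter (fun z => x ≤ z ∧ z < y)
      = insert x (univ.filter (fun z => x < z ∧ z < y)) := by
  ext z
  simp only [mem_filter, mem_univ, true_and, mem_insert]
  constructor
  · rintro ⟨h1, h2⟩
    rcases eq_or_lt_of_le h1 with rfl | h1
    · exact Or.inl rfl
    · exact Or.inr ⟨h1, h2⟩
  · rintro (rfl | ⟨h1, h2⟩)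
    · exact ⟨le_rfl, h⟩
    · exact ⟨h1.le, h2⟩

private lemma Icl_eq_insert {x y : P} (h : x < y) :
    univ.filter (fun z => x ≤ z ∧ z ≤ y)
      = insert x (insert y (univ.filter (fun z => x < z ∧ z < y))) := by
  ext z
  simp only [mem_filter, mem_univ, true_and, mem_insert]
  constructor
  · rintro ⟨h1, h2⟩
    rcases eq_or_lt_of_le h1 with rfl | h1
    · exact Or.inl rfl
    · rcases eq_or_lt_of_le h2 with rfl | h2
      · exact Or.inr (Or.inl rfl)
      · exact Or.inr (Or.inr ⟨h1, h2⟩)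
  · rintro (rfl | rfl | ⟨h1, h2⟩)
    · exact ⟨le_rfl, h.le⟩
    · exact ⟨h.le, le_rfl⟩
    · exact ⟨h1.le, h2.le⟩

private lemma sum_Icl_split {M : Type} [AddCommGroup M] {x y : P} (h : x < y) (f : P → M) :
    ∑ z ∈ univ.filter (fun z => x ≤ z ∧ z ≤ y), f z
      = f x + f y + ∑ z ∈ univ.filter (fun z => x < z ∧ z < y), f z := by
  rw [Icl_eq_insert h, Finset.sum_insert (by simp [h.ne]), Finset.sum_insert (by simp)]
  abel

private lemma sum_Ico_split {M : Type} [AddCommGroup M] {x y : P} (h : x < y) (f : P → M) :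
    ∑ z ∈ univ.filter (fun z => x ≤ z ∧ z < y), f z
      = f x + ∑ z ∈ univ.filter (fun z => x < z ∧ z < y), f z := by
  rw [Ico_eq_insert h, Finset.sum_insert (by simp)]

private lemma sum_Ioo_mobius {x y : P} (h : x < y) :
    ∑ w ∈ univ.filter (fun z => x < z ∧ z < y), mobius x w = -mobius x y - 1 := by
  have h1 := mobius_of_lt h
  rw [sum_Ico_split h, mobius_self'] at h1
  linarith

private lemma mobius_delta {x z : P} (h : x ≤ z) :
    ∑ w ∈ univ.filter (fun w => x ≤ w ∧ w ≤ z), mobius x w = if x = z then 1 else 0 := by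
  rcases eq_or_lt_of_le h with rfl | h
  · rw [if_pos rfl, Icl_self, Finset.sum_singleton, mobius_self']
  · rw [if_neg h.ne]
    have hsplit : univ.filter (fun w => x ≤ w ∧ w ≤ z)
        = insert z (univ.filter (fun w => x ≤ w ∧ w < z)) := by
      ext w
      simp only [mem_filter, mem_univ, true_and, mem_insert]
      constructor
      · rintro ⟨h1, h2⟩
        rcases eq_or_lt_of_le h2 with rfl | h2
        · exact Or.inl rfl
        · exact Or.inr ⟨h1, h2⟩
      · rintro (rfl | ⟨h1, h2⟩)
        · exact ⟨h.le, le_rfl⟩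
        · exact ⟨h1, h2.le⟩
    rw [hsplit, Finset.sum_insert (by simp), mobius_of_lt h]
    ring

/-- `∑_{x ≤ z ≤ y} (-1)^{ρ z}`. -/
private noncomputable def Esum (ρ : P → ℕ) (x y : P) : ℤ :=
  ∑ z ∈ Finset.univ.filter (fun z => x ≤ z ∧ z ≤ y), (-1) ^ (ρ z)

private lemma Esum_self (ρ : P → ℕ) (x : P) : Esum ρ x x = (-1) ^ (ρ x) := by
  rw [Esum, Icl_self, Finset.sum_singleton]

private lemma key_identity (ρ : P → ℕ) {x y : P} (h : x ≤ y) :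
    ∑ w ∈ univ.filter (fun w => x ≤ w ∧ w ≤ y), mobius x w * Esum ρ w y
      = (-1) ^ (ρ x) := by
  unfold Esum
  rw [Finset.sum_congr rfl (fun w _ => Finset.mul_sum _ _ _)]
  rw [Finset.sum_comm' (s' := fun z => univ.filter (fun w => x ≤ w ∧ w ≤ z))
    (t' := univ.filter (fun z => x ≤ z ∧ z ≤ y))
    (by
      intro w z
      simp only [mem_filter, mem_univ, true_and]
      constructor
      · rintro ⟨⟨h1, h2⟩, h3, h4⟩; exact ⟨⟨h1, h3⟩, h1.trans h3, h4⟩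
      · rintro ⟨⟨h1, h3⟩, _, h4⟩; exact ⟨⟨h1, h3.trans h4⟩, h3, h4⟩)]
  have h2 : ∀ z ∈ univ.filter (fun z => x ≤ z ∧ z ≤ y),
      (∑ w ∈ univ.filter (fun w => x ≤ w ∧ w ≤ z), mobius x w * (-1 : ℤ) ^ (ρ z))
        = if x = z then (-1 : ℤ) ^ (ρ z) else 0 := by
    intro z hz
    simp only [mem_filter, mem_univ, true_and] at hz
    rw [← Finset.sum_mul, mobius_delta hz.1]
    split <;> simp
  rw [Finset.sum_congr rfl h2, Finset.sum_ite_eq]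
  simp [h]

private lemma neg_one_pow_decomp {R : Type} [Monoid R] [HasDistribNeg R] {a b : ℕ}
    (h : a ≤ b) : (-1 : R) ^ b = (-1) ^ (b - a) * (-1) ^ a := by
  rw [← pow_add, Nat.sub_add_cancel h]

private lemma neg_one_pow_mul_self {R : Type} [Monoid R] [HasDistribNeg R] (a : ℕ) :
    (-1 : R) ^ a * (-1) ^ a = 1 := by
  rw [← pow_add, ← two_mul, pow_mul]
  norm_num

end HalfEulerAux

section HalfEulerMain

open Finset

variable {P : Type} [PartialOrder P] [BoundedOrder P] [Fintype P] {ρ : P → ℕ} {n : ℕ}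

private lemma rho_lt_of_lt (hP : IsGraded P ρ n) {x y : P} (hxy : x < y) : ρ x < ρ y := by
  have main : ∀ m : ℕ, ∀ x y : P, x < y → (univ.filter (· < y)).card ≤ m → ρ x < ρ y := by
    intro m
    induction m with
    | zero =>
      intro x y hxy hc
      have : x ∈ univ.filter (· < y) := mem_filter.mpr ⟨mem_univ _, hxy⟩
      have := Finset.card_pos.mpr ⟨x, this⟩
      omega
    | succ m ih =>
      intro x y hxy hc
      obtain ⟨z, hz, hzmax⟩ : ∃ z ∈ univ.filter (fun z => x ≤ z ∧ z < y),
          ∀ w ∈ univ.filter (fun z => x ≤ z ∧ z < y), ¬ z < w := by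
        obtain ⟨z, hz⟩ := Finset.exists_maximal
          (s := univ.filter fun z => x ≤ z ∧ z < y)
          ⟨x, mem_filter.mpr ⟨mem_univ _, le_rfl, hxy⟩⟩
        exact ⟨z, hz.1, fun w hw hlt => hlt.not_ge (hz.2 hw hlt.le)⟩
      simp only [mem_filter, mem_univ, true_and] at hz
      have hcov : z ⋖ y := by
        refine ⟨hz.2, fun w hw1 hw2 => ?_⟩
        exact hzmax w (mem_filter.mpr ⟨mem_univ _, hz.1.trans hw1.le, hw2⟩) hw1
      have hry : ρ y = ρ z + 1 := hP.2.2 z y hcov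
      rcases eq_or_lt_of_le hz.1 with rfl | hxz
      · omega
      · have hsubset : univ.filter (· < z) ⊆ univ.filter (· < y) := by
          intro w hw
          simp only [mem_filter, mem_univ, true_and] at hw ⊢
          exact hw.trans hz.2
        have hss : univ.filter (· < z) ⊂ univ.filter (· < y) :=
          (Finset.ssubset_iff_of_subset hsubset).mpr
            ⟨z, mem_filter.mpr ⟨mem_univ _, hz.2⟩, by simp⟩
        have hcard := Finset.card_lt_card hss
        have := ih x z hxz (by omega)
        omega
  exact main _ x y hxy le_rfl

/-- If the Möbius function vanishes on even positive-rank intervals, `Esum` takes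
the half-Eulerian values. -/
private lemma Esum_eq_of_mobius (hP : IsGraded P ρ n)
    (hB : ∀ u v : P, u ≤ v → 0 < ρ v - ρ u → Even (ρ v - ρ u) → mobius u v = 0) :
    ∀ x y : P, x < y →
      Esum ρ x y = if Even (ρ y - ρ x) then (-1) ^ (ρ x) else 0 := by
  have main : ∀ m : ℕ, ∀ x y : P, x < y → ρ y - ρ x ≤ m →
      Esum ρ x y = if Even (ρ y - ρ x) then (-1) ^ (ρ x) else 0 := by
    intro m
    induction m with
    | zero =>
      intro x y hxy hm
      have := rho_lt_of_lt hP hxy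
      omega
    | succ m ih =>
      intro x y hxy hm
      have hrxy := rho_lt_of_lt hP hxy
      have hkey := key_identity ρ (x := x) (y := y) hxy.le
      rw [sum_Icl_split hxy (fun w => mobius x w * Esum ρ w y), mobius_self',
        Esum_self, one_mul] at hkey
      by_cases hev : Even (ρ y - ρ x)
      · have hmu : mobius x y = 0 := hB x y hxy.le (by omega) hev
        have hmid : ∀ w ∈ univ.filter (fun z => x < z ∧ z < y),
            mobius x w * Esum ρ w y = 0 := by
          intro w hw
          simp only [mem_filter, mem_univ, true_and] at hw
          have h1 := rho_lt_of_lt hP hw.1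
          have h2 := rho_lt_of_lt hP hw.2
          by_cases hev2 : Even (ρ w - ρ x)
          · rw [hB x w hw.1.le (by omega) hev2, zero_mul]
          · have hodd : ¬ Even (ρ y - ρ w) := by
              have e1 := Nat.even_sub h1.le
              have e2 := Nat.even_sub h2.le
              have e3 := Nat.even_sub hrxy.le
              tauto
            rw [ih w y hw.2 (by omega), if_neg hodd, mul_zero]
        rw [Finset.sum_eq_zero hmid, hmu] at hkey
        rw [if_pos hev]
        linarith
      · rw [if_neg hev]
        have ht : (-1 : ℤ) ^ (ρ y) = -(-1) ^ (ρ x) := by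
          rw [neg_one_pow_decomp hrxy.le,
            (Nat.not_even_iff_odd.mp hev).neg_one_pow, neg_one_mul]
        have hmid : ∀ w ∈ univ.filter (fun z => x < z ∧ z < y),
            mobius x w * Esum ρ w y = -((-1) ^ (ρ x) * mobius x w) := by
          intro w hw
          simp only [mem_filter, mem_univ, true_and] at hw
          have h1 := rho_lt_of_lt hP hw.1
          have h2 := rho_lt_of_lt hP hw.2
          by_cases hev2 : Even (ρ w - ρ x)
          · rw [hB x w hw.1.le (by omega) hev2]
            ring
          · have hev3 : Even (ρ y - ρ w) := by
              have e1 := Nat.even_sub h1.le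
              have e2 := Nat.even_sub h2.le
              have e3 := Nat.even_sub hrxy.le
              tauto
            have hw' : (-1 : ℤ) ^ (ρ w) = -(-1) ^ (ρ x) := by
              rw [neg_one_pow_decomp h1.le,
                (Nat.not_even_iff_odd.mp hev2).neg_one_pow, neg_one_mul]
            rw [ih w y hw.2 (by omega), if_pos hev3, hw']
            ring
        rw [Finset.sum_congr rfl hmid, Finset.sum_neg_distrib, ← Finset.mul_sum,
          sum_Ioo_mobius hxy, ht] at hkey
        linear_combination hkey
  intro x y hxy
  exact main _ x y hxy le_rfl

end HalfEulerMain

section HalfEulerMain2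

open Finset

variable {P : Type} [PartialOrder P] [BoundedOrder P] [Fintype P] {ρ : P → ℕ} {n : ℕ}

/-- Cast of `Esum` split into endpoints plus open-interval sum, over `ℝ`. -/
private lemma Esum_cast_split (hP : IsGraded P ρ n) {x y : P} (h : x < y) :
    ((Esum ρ x y : ℤ) : ℝ) = (-1 : ℝ) ^ (ρ x) + (-1) ^ (ρ y)
      + (∑ z ∈ univ.filter (fun z => x < z ∧ z < y), (-1 : ℝ) ^ (ρ z - ρ x))
        * (-1) ^ (ρ x) := by
  have h1 : Esum ρ x y = (-1 : ℤ) ^ (ρ x) + (-1) ^ (ρ y)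
      + ∑ z ∈ univ.filter (fun z => x < z ∧ z < y), (-1 : ℤ) ^ (ρ z) := by
    rw [Esum]
    exact sum_Icl_split h _
  rw [h1]
  push_cast
  rw [Finset.sum_mul]
  congr 1
  refine Finset.sum_congr rfl fun z hz => ?_
  simp only [mem_filter, mem_univ, true_and] at hz
  exact neg_one_pow_decomp (rho_lt_of_lt hP hz.1).le

/-- From the half-Eulerian `Esum` values, derive the `μ_{1/2}` values. -/
private lemma muk_eq_of_Esum (hP : IsGraded P ρ n)
    (hE : ∀ x y : P, x < y →
      Esum ρ x y = if Even (ρ y - ρ x) then (-1) ^ (ρ x) else 0) :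
    ∀ x y : P, x ≤ y → muk (1/2) x y = (-1 : ℝ) ^ (ρ y - ρ x) := by
  have main : ∀ m : ℕ, ∀ x y : P, x ≤ y → ρ y - ρ x ≤ m →
      muk (1/2) x y = (-1 : ℝ) ^ (ρ y - ρ x) := by
    intro m
    induction m with
    | zero =>
      intro x y hxy hm
      rcases eq_or_lt_of_le hxy with rfl | h
      · rw [muk.eq_def]; simp
      · exact absurd (rho_lt_of_lt hP h) (by omega)
    | succ m ih =>
      intro x y hxy hm
      rcases eq_or_lt_of_le hxy with rfl | h
      · rw [muk.eq_def]; simp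
      · have hrxy := rho_lt_of_lt hP h
        rw [muk_of_lt h]
        have hsum : ∀ z ∈ univ.filter (fun z => x < z ∧ z < y),
            muk (1/2) x z = (-1 : ℝ) ^ (ρ z - ρ x) := by
          intro z hz
          simp only [mem_filter, mem_univ, true_and] at hz
          have h1 := rho_lt_of_lt hP hz.1
          have h2 := rho_lt_of_lt hP hz.2
          exact ih x z hz.1.le (by omega)
        rw [Finset.sum_congr rfl hsum]
        have hcast := Esum_cast_split hP h
        have hss := neg_one_pow_mul_self (R := ℝ) (ρ x)
        set T : ℝ := ∑ z ∈ univ.filter (fun z => x < z ∧ z < y), (-1 : ℝ) ^ (ρ z - ρ x)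
          with hT
        by_cases hev : Even (ρ y - ρ x)
        · have hEv : ((Esum ρ x y : ℤ) : ℝ) = (-1 : ℝ) ^ (ρ x) := by
            rw [hE x y h, if_pos hev]; push_cast; ring
          have hty : (-1 : ℝ) ^ (ρ y) = (-1) ^ (ρ x) := by
            rw [neg_one_pow_decomp hrxy.le, hev.neg_one_pow, one_mul]
          rw [hEv, hty] at hcast
          -- hcast : s = s + s + T * s
          have hTs : T * (-1 : ℝ) ^ (ρ x) = -(-1 : ℝ) ^ (ρ x) := by linarith
          have hT1 : T = -1 := by
            calc T = T * ((-1 : ℝ) ^ (ρ x) * (-1) ^ (ρ x)) := by rw [hss, mul_one]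
              _ = T * (-1 : ℝ) ^ (ρ x) * (-1) ^ (ρ x) := by ring
              _ = -(-1 : ℝ) ^ (ρ x) * (-1) ^ (ρ x) := by rw [hTs]
              _ = -1 := by rw [neg_mul, hss]
          rw [hT1, hev.neg_one_pow]
          norm_num
        · have hEv : ((Esum ρ x y : ℤ) : ℝ) = 0 := by
            rw [hE x y h, if_neg hev]; push_cast; ring
          have hty : (-1 : ℝ) ^ (ρ y) = -(-1) ^ (ρ x) := by
            rw [neg_one_pow_decomp hrxy.le,
              (Nat.not_even_iff_odd.mp hev).neg_one_pow, neg_one_mul]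
          rw [hEv, hty] at hcast
          have hTs : T * (-1 : ℝ) ^ (ρ x) = 0 := by linarith
          have hT1 : T = 0 := by
            calc T = T * ((-1 : ℝ) ^ (ρ x) * (-1) ^ (ρ x)) := by rw [hss, mul_one]
              _ = T * (-1 : ℝ) ^ (ρ x) * (-1) ^ (ρ x) := by ring
              _ = 0 := by rw [hTs, zero_mul]
          rw [hT1, (Nat.not_even_iff_odd.mp hev).neg_one_pow]
          norm_num
  intro x y hxy
  exact main _ x y hxy le_rfl

/-- From half-Eulerianness, derive the `Esum` values. -/
private lemma Esum_eq_of_muk (hP : IsGraded P ρ n) (hA : IsKEulerian P ρ (1/2)) :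
    ∀ x y : P, x < y →
      Esum ρ x y = if Even (ρ y - ρ x) then (-1) ^ (ρ x) else 0 := by
  intro x y h
  have hrxy := rho_lt_of_lt hP h
  have hkr := hA x y h.le
  rw [muk_of_lt h] at hkr
  have hsum : ∀ z ∈ univ.filter (fun z => x < z ∧ z < y),
      muk (1/2) x z = (-1 : ℝ) ^ (ρ z - ρ x) := fun z hz => by
    simp only [mem_filter, mem_univ, true_and] at hz
    exact hA x z hz.1.le
  rw [Finset.sum_congr rfl hsum] at hkr
  have hcast := Esum_cast_split hP h
  have hss := neg_one_pow_mul_self (R := ℝ) (ρ x)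
  set T : ℝ := ∑ z ∈ univ.filter (fun z => x < z ∧ z < y), (-1 : ℝ) ^ (ρ z - ρ x) with hT
  by_cases hev : Even (ρ y - ρ x)
  · rw [if_pos hev]
    rw [hev.neg_one_pow] at hkr
    have hT1 : T = -1 := by linarith
    have hty : (-1 : ℝ) ^ (ρ y) = (-1) ^ (ρ x) := by
      rw [neg_one_pow_decomp hrxy.le, hev.neg_one_pow, one_mul]
    rw [hT1, hty] at hcast
    have : ((Esum ρ x y : ℤ) : ℝ) = (((-1 : ℤ) ^ (ρ x) : ℤ) : ℝ) := by
      rw [hcast]; push_cast; ring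
    exact_mod_cast this
  · rw [if_neg hev]
    rw [(Nat.not_even_iff_odd.mp hev).neg_one_pow] at hkr
    have hT1 : T = 0 := by linarith
    have hty : (-1 : ℝ) ^ (ρ y) = -(-1) ^ (ρ x) := by
      rw [neg_one_pow_decomp hrxy.le,
        (Nat.not_even_iff_odd.mp hev).neg_one_pow, neg_one_mul]
    rw [hT1, hty] at hcast
    have : ((Esum ρ x y : ℤ) : ℝ) = ((0 : ℤ) : ℝ) := by
      rw [hcast]; push_cast; ring
    exact_mod_cast this

/-- From the half-Eulerian `Esum` values, the Möbius function vanishes on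
even positive-rank intervals. -/
private lemma mobius_eq_zero_of_Esum (hP : IsGraded P ρ n)
    (hE : ∀ x y : P, x < y →
      Esum ρ x y = if Even (ρ y - ρ x) then (-1) ^ (ρ x) else 0) :
    ∀ x y : P, x ≤ y → 0 < ρ y - ρ x → Even (ρ y - ρ x) → mobius x y = 0 := by
  have main : ∀ m : ℕ, ∀ x y : P, x ≤ y → 0 < ρ y - ρ x → ρ y - ρ x ≤ m →
      Even (ρ y - ρ x) → mobius x y = 0 := by
    intro m
    induction m with
    | zero => intro x y _ _ _ _; omega
    | succ m ih =>
      intro x y hxy hpos hm hev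
      have hxy' : x < y := lt_of_le_of_ne hxy (by rintro rfl; omega)
      have hrxy := rho_lt_of_lt hP hxy'
      have hkey := key_identity ρ (x := x) (y := y) hxy
      rw [sum_Icl_split hxy' (fun w => mobius x w * Esum ρ w y), mobius_self',
        Esum_self, one_mul] at hkey
      have hmid : ∀ w ∈ univ.filter (fun z => x < z ∧ z < y),
          mobius x w * Esum ρ w y = 0 := by
        intro w hw
        simp only [mem_filter, mem_univ, true_and] at hw
        have h1 := rho_lt_of_lt hP hw.1
        have h2 := rho_lt_of_lt hP hw.2
        by_cases hev2 : Even (ρ w - ρ x)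
        · rw [ih x w hw.1.le (by omega) (by omega) hev2, zero_mul]
        · have hodd : ¬ Even (ρ y - ρ w) := by
            have e1 := Nat.even_sub h1.le
            have e2 := Nat.even_sub h2.le
            have e3 := Nat.even_sub hrxy.le
            tauto
          rw [hE w y hw.2, if_neg hodd, mul_zero]
      have hty : (-1 : ℤ) ^ (ρ y) = (-1) ^ (ρ x) := by
        rw [neg_one_pow_decomp hrxy.le, hev.neg_one_pow, one_mul]
      rw [Finset.sum_eq_zero hmid, hE x y hxy', if_pos hev, hty] at hkey
      have hmu : mobius x y * (-1 : ℤ) ^ (ρ x) = 0 := by linarith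
      rcases mul_eq_zero.mp hmu with h0 | h0
      · exact h0
      · exact absurd h0 (pow_ne_zero _ (by norm_num))
  intro x y hxy hpos hev
  exact main _ x y hxy hpos le_rfl hev

end HalfEulerMain2


/-- `P` is half-Eulerian iff the ordinary Möbius function vanishes on
every interval of positive even rank. -/
theorem isHalfEulerian_iff_mobius {P : Type} [PartialOrder P] [BoundedOrder P] [Finite P]
    (n : ℕ) (ρ : P → ℕ) (hP : IsGraded P ρ n) :
    IsKEulerian P ρ (1/2) ↔
      ∀ x y : P, x ≤ y → 0 < ρ y - ρ x → Even (ρ y - ρ x) →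
        mobius x y = 0 := by
  constructor
  · intro hA
    exact mobius_eq_zero_of_Esum hP (Esum_eq_of_muk hP hA)
  · intro hB
    exact muk_eq_of_Esum hP (Esum_eq_of_mobius hP hB)
end

section
/- In the L^k-vector presentation via noncommutative generating functions: for a graded poset P of rank n+1 with Υ(a,b) = ∑_{S⊆[1,n]} f_S(P) u_S (where u_S = u_1⋯u_n with u_i = a if i∉S and u_i = b if i∈S), substituting a = e and b = (c−e)/(2k) yields Υ(e,(c−e)/(2k)) = ∑_{T⊆[1,n]} L^{k,n+1}_T(P) v_T, where v_T = v_1⋯v_n with v_i = c if i∉T and v_i = e if i∈T. -/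
open scoped Classical

attribute [local instance] Fintype.ofFinite

/-- The generator `c` of Stanley's `ce`-index algebra. -/
noncomputable def cgen : FreeAlgebra ℝ Bool := FreeAlgebra.ι ℝ true

/-- The generator `e` of Stanley's `ce`-index algebra. -/
noncomputable def egen : FreeAlgebra ℝ Bool := FreeAlgebra.ι ℝ false

/-- The noncommutative flag-vector generating function `Υ(a,b)`. -/
noncomputable def Upsilon {P : Type} [PartialOrder P] [Fintype P] (n : ℕ) (ρ : P → ℕ)
    (a b : FreeAlgebra ℝ Bool) : FreeAlgebra ℝ Bool :=
  ∑ S ∈ (Finset.Icc 1 n).powerset, (flagNum ρ S : ℝ) •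
    (List.ofFn fun i : Fin n => if (i : ℕ) + 1 ∈ S then b else a).prod


/-!
Put `κ = (2k)⁻¹`, so that `b = κ • (c - e)`. Every letter of `u_S` is then `β_i e + α_i c`, with
`(α_i, β_i) = (κ, -κ)` for `i ∈ S` and `(0, 1)` otherwise. Expanding the product noncommutatively,
`v_T` occurs with coefficient `∏_{i ∈ T} β_i * ∏_{i ∉ T} α_i`, which vanishes unless
`[1,n] \ T ⊆ S` and then equals `(-1)^(n-|T|) (-κ)^|S|`; summing against `f_S` gives `L^k_T`.
-/

open Finset

def flagWord {A : Type*} [Monoid A] (n : ℕ) (S : Finset ℕ) (b a : A) : A :=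
  (List.ofFn fun i : Fin n => if (i : ℕ) + 1 ∈ S then b else a).prod

section flagWord

variable {A : Type*} [Monoid A]

lemma flagWord_succ (n : ℕ) (S : Finset ℕ) (b a : A) :
    flagWord (n + 1) S b a = flagWord n S b a * if n + 1 ∈ S then b else a := by
  rw [flagWord, List.ofFn_succ', List.prod_concat]
  simp [flagWord]

lemma flagWord_insert_succ (n : ℕ) (S : Finset ℕ) (b a : A) :
    flagWord n (insert (n + 1) S) b a = flagWord n S b a := by
  unfold flagWord
  congr 2
  ext i
  simp [show (i : ℕ) ≠ n by omega]

end flagWord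

theorem prod_ofFn_smul_add_smul {R A : Type*} [CommSemiring R] [Semiring A] [Algebra R A]
    (α β : ℕ → R) (x y : A) (n : ℕ) :
    (List.ofFn fun i : Fin n => β (i + 1) • y + α (i + 1) • x).prod =
      ∑ T ∈ (Icc 1 n).powerset,
        ((∏ j ∈ T, β j) * ∏ j ∈ Icc 1 n \ T, α j) • flagWord n T y x := by
  induction n with
  | zero => simp [flagWord]
  | succ n ih =>
    have hn : n + 1 ∉ Icc 1 n := by simp
    rw [List.ofFn_succ', List.prod_concat, ← insert_Icc_right_eq_Icc_add_one (by omega),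
      sum_powerset_insert hn]
    simp only [Fin.val_castSucc, Fin.val_last, ih, sum_mul, mul_add, ← sum_add_distrib]
    refine sum_congr rfl fun T hT => ?_
    have hnT : n + 1 ∉ T := fun h => hn (mem_powerset.mp hT h)
    rw [flagWord_succ, flagWord_succ, flagWord_insert_succ, if_neg hnT,
      if_pos (mem_insert_self _ _), insert_sdiff_of_notMem _ hnT, prod_insert (by simp),
      prod_insert hnT, insert_sdiff_insert, sdiff_insert_of_notMem hn]
    simp only [smul_mul_smul_comm]
    rw [add_comm]
    congr 2 <;> ring

lemma prod_ite_neg_mul_prod_ite_eq {R : Type*} [CommRing R] (κ : R) {n : ℕ} {S T : Finset ℕ}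
    (hS : S ⊆ Icc 1 n) (hT : T ⊆ Icc 1 n) :
    (∏ j ∈ T, if j ∈ S then -κ else 1) * ∏ j ∈ Icc 1 n \ T, (if j ∈ S then κ else 0) =
      if Icc 1 n \ T ⊆ S then (-1) ^ (n - #T) * (-κ) ^ #S else 0 := by
  rw [prod_ite_zero, prod_ite, prod_const_one, mul_one, prod_const, prod_const,
    filter_mem_eq_inter]
  by_cases hsub : Icc 1 n \ T ⊆ S
  · have hST : S \ T = Icc 1 n \ T := (sdiff_subset_sdiff hS le_rfl).antisymm
      fun j hj => mem_sdiff.mpr ⟨hsub hj, (mem_sdiff.mp hj).2⟩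
    have hcard : #S = #(T ∩ S) + (n - #T) := by
      rw [← card_inter_add_card_sdiff S T, inter_comm, hST, card_sdiff_of_subset hT,
        Nat.card_Icc, Nat.add_sub_cancel]
    rw [if_pos fun j hj => hsub hj, if_pos hsub, hcard, card_sdiff_of_subset hT, Nat.card_Icc,
      Nat.add_sub_cancel, pow_add, mul_left_comm, ← mul_pow, neg_one_mul, neg_neg]
  · rw [if_neg fun h => hsub fun j hj => h j hj, if_neg hsub, mul_zero]

theorem sum_smul_flagWord_smul_sub {R A : Type*} [CommRing R] [Ring A] [Algebra R A]
    (F : Finset ℕ → R) (κ : R) (x y : A) (n : ℕ) :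
    ∑ S ∈ (Icc 1 n).powerset, F S • flagWord n S (κ • (x - y)) y =
      ∑ T ∈ (Icc 1 n).powerset,
        ((-1) ^ (n - #T) * ∑ S ∈ (Icc 1 n).powerset with Icc 1 n \ T ⊆ S, (-κ) ^ #S * F S) •
          flagWord n T y x := by
  have hexpand (S : Finset ℕ) : flagWord n S (κ • (x - y)) y =
      ∑ T ∈ (Icc 1 n).powerset, ((∏ j ∈ T, if j ∈ S then -κ else 1) *
        ∏ j ∈ Icc 1 n \ T, if j ∈ S then κ else 0) • flagWord n T y x := by
    rw [← prod_ofFn_smul_add_smul (fun j => if j ∈ S then κ else 0)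
      (fun j => if j ∈ S then -κ else 1)]
    unfold flagWord
    congr 2
    ext i
    split_ifs <;> simp [sub_eq_neg_add]
  simp only [hexpand, smul_sum, smul_smul]
  rw [sum_comm]
  refine sum_congr rfl fun T hT => ?_
  rw [← sum_smul, sum_filter, mul_sum]
  congr 1
  refine sum_congr rfl fun S hS => ?_
  rw [prod_ite_neg_mul_prod_ite_eq κ (mem_powerset.mp hS) (mem_powerset.mp hT)]
  split_ifs <;> ring

theorem upsilon_eq_Lk_general {P : Type} [PartialOrder P] [Finite P]
    (n : ℕ) (ρ : P → ℕ) (k : ℝ) :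
    Upsilon n ρ egen ((2 * k)⁻¹ • (cgen - egen)) =
      ∑ T ∈ (Finset.Icc 1 n).powerset, Lk k n ρ T •
        (List.ofFn fun i : Fin n => if (i : ℕ) + 1 ∈ T then egen else cgen).prod := by
  simp only [Upsilon, Lk, one_div]
  exact sum_smul_flagWord_smul_sub (fun S => (flagNum ρ S : ℝ)) (2 * k)⁻¹ cgen egen n

/-- `Υ(e,(c-e)/(2k)) = ∑_T L^{k,n+1}_T(P) v_T`. -/
theorem upsilon_eq_Lk {P : Type} [PartialOrder P] [BoundedOrder P] [Finite P]
    (n : ℕ) (ρ : P → ℕ) (hP : IsGraded P ρ n) (k : ℝ) (hk : 0 < k) :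
    Upsilon n ρ egen ((2 * k)⁻¹ • (cgen - egen)) =
      ∑ T ∈ (Finset.Icc 1 n).powerset, Lk k n ρ T •
        (List.ofFn fun i : Fin n => if (i : ℕ) + 1 ∈ T then egen else cgen).prod :=
  upsilon_eq_Lk_general n ρ k
end
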